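/- arXiv:2107.06626 — 5 statements merged into one kernel-verified Lean document; each statement's English description precedes it below -/
import Mathlib

section
/- Let f : I → ℝ^k be any map with Energy₁(f) ≤ ε and let 0 < α ≤ 1/16. Then there exist a point ô ∈ O and a subset Î ⊆ I with |Î| ≥ (1 − α)·|I| such that, setting h(v) = f(v) − f(ô), one has ‖h(v)‖₂ ≤ 1 + 3.01·ε/α for every v ∈ Î, and (1/C(|Î|,2))·Σ_{{u,v}⊆Î} |⟨h(u),h(v)⟩ − ⟨u,v⟩| ≤ (10 + 1/(2α))·ε, the sum over unordered pairs of distinct points of Î. -/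
open scoped BigOperators
open scoped Classical

/-- `expans f u v = d_Y(f(u),f(v)) / d_X(u,v)`. -/
noncomputable def expans {α β : Type*} [PseudoMetricSpace α] [PseudoMetricSpace β]
    (f : α → β) (u v : α) : ℝ :=
  dist (f u) (f v) / dist u v

/-- `dist_f(u,v) = max{expans_f(u,v), 1/expans_f(u,v)}`. -/
noncomputable def pairDist {α β : Type*} [PseudoMetricSpace α] [PseudoMetricSpace β]
    (f : α → β) (u v : α) : ℝ :=
  max (expans f u v) (expans f u v)⁻¹

/-- ℓ_q-distortion; the sum over ordered pairs of distinct points divided by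
`|X|·(|X|-1)` equals the sum over unordered pairs divided by `C(|X|,2)`. -/
noncomputable def lqDist {α β : Type*} [PseudoMetricSpace α] [PseudoMetricSpace β]
    (X : Finset α) (f : α → β) (q : ℝ) : ℝ :=
  ((∑ p ∈ X.offDiag, pairDist f p.1 p.2 ^ q) /
      ((X.card : ℝ) * ((X.card : ℝ) - 1))) ^ (1 / q)

/-- `Energy_q(f)`. -/
noncomputable def energy {α β : Type*} [PseudoMetricSpace α] [PseudoMetricSpace β]
    (X : Finset α) (f : α → β) (q : ℝ) : ℝ :=
  ((∑ p ∈ X.offDiag, |expans f p.1 p.2 - 1| ^ q) /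
      ((X.card : ℝ) * ((X.card : ℝ) - 1))) ^ (1 / q)

/-- `REM_q(f)`. -/
noncomputable def rem {α β : Type*} [PseudoMetricSpace α] [PseudoMetricSpace β]
    (X : Finset α) (f : α → β) (q : ℝ) : ℝ :=
  ((∑ p ∈ X.offDiag,
      (|dist (f p.1) (f p.2) - dist p.1 p.2| /
        min (dist (f p.1) (f p.2)) (dist p.1 p.2)) ^ q) /
      ((X.card : ℝ) * ((X.card : ℝ) - 1))) ^ (1 / q)

/-- `Stress_q(f)`. -/
noncomputable def stress {α β : Type*} [PseudoMetricSpace α] [PseudoMetricSpace β]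
    (X : Finset α) (f : α → β) (q : ℝ) : ℝ :=
  ((∑ p ∈ X.offDiag, |dist (f p.1) (f p.2) - dist p.1 p.2| ^ q) /
      (∑ p ∈ X.offDiag, dist p.1 p.2 ^ q)) ^ (1 / q)

/-- `Stress*_q(f)`. -/
noncomputable def stressStar {α β : Type*} [PseudoMetricSpace α] [PseudoMetricSpace β]
    (X : Finset α) (f : α → β) (q : ℝ) : ℝ :=
  ((∑ p ∈ X.offDiag, |dist (f p.1) (f p.2) - dist p.1 p.2| ^ q) /
      (∑ p ∈ X.offDiag, dist (f p.1) (f p.2) ^ q)) ^ (1 / q)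

/-- `Φ_r(f)`, the r-th moment of expansion. -/
noncomputable def phiR {α β : Type*} [PseudoMetricSpace α] [PseudoMetricSpace β]
    (X : Finset α) (f : α → β) (r : ℝ) : ℝ :=
  ((∑ p ∈ X.offDiag, expans f p.1 p.2 ^ r) /
      ((X.card : ℝ) * ((X.card : ℝ) - 1))) ^ (1 / r)

/-- `σ_{q,r}(f)`. -/
noncomputable def sigmaDist {α β : Type*} [PseudoMetricSpace α] [PseudoMetricSpace β]
    (X : Finset α) (f : α → β) (q r : ℝ) : ℝ :=
  ((∑ p ∈ X.offDiag, |expans f p.1 p.2 / phiR X f r - 1| ^ q) /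
      ((X.card : ℝ) * ((X.card : ℝ) - 1))) ^ (1 / q)

/-- Normalized additive stress `S̄tress₁(f)`. -/
noncomputable def sbarStress {α β : Type*} [PseudoMetricSpace α] [PseudoMetricSpace β]
    (X : Finset α) (f : α → β) : ℝ :=
  (∑ p ∈ X.offDiag, |dist (f p.1) (f p.2) - dist p.1 p.2|) /
    ((X.card : ℝ) * ((X.card : ℝ) - 1))

/-! Averaging the energy over the `d` points of `O`, a third of `I`, gives `o₀ ∈ O` whose row
`∑ᵥ |expans f o₀ v - 1|` is at most `3ε(|I| - 1)`. By Markov's inequality all but `α(|I| - 1)`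
points `v` satisfy `|expans f o₀ v - 1| ≤ 3ε/α`; together with `o₀` they form `Î`, whose images
lie within `(1 + 3ε/α)(1 + ε/100)` of `f o₀`.

Polarization at the base point `o₀` writes `⟨h u, h v⟩ - ⟨u - o₀, v - o₀⟩` as half a signed sum of
the defects `|d_f² - d²|` on the pairs `{o₀, u}`, `{o₀, v}`, `{u, v}`, and each such defect equals
`|expans - 1| · d · (d_f + d)`. Summed over `Î`, the first two are controlled by the row of `o₀`
and the third by the energy, while moving the base point from `o₀` to `0` costs at most
`‖o₀‖ (2 + ‖o₀‖)` per pair. -/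

open Finset

section FinsetSums

variable {γ : Type*} [DecidableEq γ]

lemma sum_offDiag_eq_sum_sum_erase (s : Finset γ) (g : γ → γ → ℝ) :
    ∑ p ∈ s.offDiag, g p.1 p.2 = ∑ u ∈ s, ∑ v ∈ s.erase u, g u v := by
  have : s.offDiag = {p ∈ s ×ˢ s | p.1 ≠ p.2} := by ext; simp [and_assoc]
  rw [this, sum_filter, sum_product]
  refine sum_congr rfl fun u _ => ?_
  rw [← filter_ne s u, sum_filter]

omit [DecidableEq γ] in
lemma cast_card_offDiag (s : Finset γ) : (#s.offDiag : ℝ) = #s * (#s - 1 : ℝ) := by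
  rw [offDiag_card, Nat.cast_sub (Nat.le_mul_self _), Nat.cast_mul]
  ring

lemma sum_offDiag_fst (s : Finset γ) (g : γ → ℝ) :
    ∑ p ∈ s.offDiag, g p.1 = (#s - 1 : ℝ) * ∑ u ∈ s, g u := by
  rw [sum_offDiag_eq_sum_sum_erase s fun u _ => g u, mul_sum]
  refine sum_congr rfl fun u hu => ?_
  rw [sum_const, card_erase_of_mem hu, nsmul_eq_mul, Nat.cast_pred (card_pos.mpr ⟨u, hu⟩),
    mul_comm]

lemma sum_offDiag_snd (s : Finset γ) (g : γ → ℝ) :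
    ∑ p ∈ s.offDiag, g p.2 = (#s - 1 : ℝ) * ∑ u ∈ s, g u := by
  rw [sum_offDiag_eq_sum_sum_erase s fun _ v => g v]
  rw [sum_congr rfl fun u hu => sum_erase_eq_sub hu, sum_sub_distrib, sum_const, nsmul_eq_mul]
  ring

lemma exists_mem_sum_erase_le_sum_offDiag_div {O X : Finset γ} (hOX : O ⊆ X)
    (hO : O.Nonempty) {g : γ → γ → ℝ} (hg : ∀ u v, 0 ≤ g u v) :
    ∃ o ∈ O, ∑ v ∈ X.erase o, g o v ≤ (∑ p ∈ X.offDiag, g p.1 p.2) / #O := by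
  refine exists_le_of_sum_le hO ?_
  rw [sum_const, nsmul_eq_mul, mul_div_cancel₀ _ (by exact_mod_cast hO.card_pos.ne'),
    sum_offDiag_eq_sum_sum_erase]
  exact sum_le_sum_of_subset_of_nonneg hOX fun u _ _ => sum_nonneg fun v _ => hg u v

omit [DecidableEq γ] in
lemma exists_subset_card_ge_forall_le (s : Finset γ) {g : γ → ℝ} (hg : ∀ x ∈ s, 0 ≤ g x)
    {t : ℝ} (ht : 0 < t) :
    ∃ J ⊆ s, (#s : ℝ) - (∑ x ∈ s, g x) / t ≤ #J ∧ ∀ x ∈ J, g x ≤ t := by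
  refine ⟨{x ∈ s | g x ≤ t}, filter_subset _ _, ?_, fun x hx => (mem_filter.mp hx).2⟩
  have markov : (#{x ∈ s | t < g x} : ℝ) * t ≤ ∑ x ∈ s, g x :=
    calc (#{x ∈ s | t < g x} : ℝ) * t ≤ ∑ x ∈ s with t < g x, g x := by
          rw [← nsmul_eq_mul]
          exact card_nsmul_le_sum _ _ _ fun x hx => (mem_filter.mp hx).2.le
      _ ≤ ∑ x ∈ s, g x :=
          sum_le_sum_of_subset_of_nonneg (filter_subset _ _) fun x hx _ => hg x hx
  have hsplit : (#{x ∈ s | g x ≤ t} : ℝ) + #{x ∈ s | t < g x} = #s := by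
    simp_rw [← not_le]
    exact_mod_cast card_filter_add_card_filter_not _
  rw [← le_div_iff₀ ht] at markov
  linarith

end FinsetSums

section Expansion

variable {α β : Type*}

lemma sum_abs_expans_sub_one_le_of_energy_le [PseudoMetricSpace α] [PseudoMetricSpace β]
    {X : Finset α} (hX : 2 ≤ #X) {f : α → β} {ε : ℝ} (h : energy X f 1 ≤ ε) :
    ∑ p ∈ X.offDiag, |expans f p.1 p.2 - 1| ≤ ε * (#X * (#X - 1 : ℝ)) := by
  have hX' : (2 : ℝ) ≤ #X := by exact_mod_cast hX
  simp only [energy, div_one, Real.rpow_one] at h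
  exact (div_le_iff₀ (by nlinarith)).mp h

lemma dist_eq_expans_mul [PseudoMetricSpace α] [PseudoMetricSpace β] (f : α → β) {x y : α}
    (h : dist x y ≠ 0) : dist (f x) (f y) = expans f x y * dist x y :=
  (div_mul_cancel₀ _ h).symm

lemma dist_le_of_abs_expans_sub_one_le [MetricSpace α] [PseudoMetricSpace β] (f : α → β)
    {x y : α} {t a : ℝ} (ht : |expans f x y - 1| ≤ t) (ha : dist x y ≤ a) :
    dist (f x) (f y) ≤ (1 + t) * a := by
  obtain rfl | hxy := eq_or_ne x y
  · rw [dist_self]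
    exact mul_nonneg (by linarith [abs_nonneg (expans f x x - 1)]) (dist_nonneg.trans ha)
  rw [dist_eq_expans_mul f (dist_ne_zero.mpr hxy)]
  exact mul_le_mul (by linarith [le_abs_self (expans f x y - 1)]) ha dist_nonneg
    (by linarith [abs_nonneg (expans f x y - 1)])

lemma exists_subset_card_ge_dist_le [MetricSpace α] [PseudoMetricSpace β] [DecidableEq α]
    (f : α → β) {X : Finset α} {o : α} (ho : o ∈ X) {a t : ℝ} (ht : 0 < t)
    (ha : ∀ v ∈ X, dist o v ≤ a) :
    ∃ J ⊆ X, o ∈ J ∧ (#X : ℝ) - (∑ v ∈ X.erase o, |expans f o v - 1|) / t ≤ #J ∧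
      ∀ v ∈ J, dist (f o) (f v) ≤ (1 + t) * a := by
  obtain ⟨J, hJ, hcard, hJt⟩ :=
    exists_subset_card_ge_forall_le (X.erase o) (fun v _ => abs_nonneg (expans f o v - 1)) ht
  refine ⟨insert o J, insert_subset ho (hJ.trans (erase_subset _ _)), mem_insert_self _ _, ?_, ?_⟩
  · rw [card_erase_of_mem ho, Nat.cast_pred (card_pos.mpr ⟨o, ho⟩)] at hcard
    rw [card_insert_of_notMem fun h => notMem_erase o X (hJ h), Nat.cast_succ]
    linarith
  · intro v hv
    obtain rfl | hv := mem_insert.mp hv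
    · rw [dist_self]
      exact mul_nonneg (by linarith) (dist_nonneg.trans (ha v ho))
    · exact dist_le_of_abs_expans_sub_one_le f (hJt v hv) (ha v (mem_of_mem_erase (hJ hv)))

noncomputable def sqDistDefect [PseudoMetricSpace α] [PseudoMetricSpace β] (f : α → β)
    (x y : α) : ℝ :=
  |dist (f x) (f y) ^ 2 - dist x y ^ 2|

lemma sqDistDefect_le [MetricSpace α] [PseudoMetricSpace β] (f : α → β) {x y : α} {a b : ℝ}
    (ha : dist x y ≤ a) (hb : dist (f x) (f y) ≤ b) :
    sqDistDefect f x y ≤ |expans f x y - 1| * (a * (b + a)) := by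
  have ha0 : 0 ≤ a := dist_nonneg.trans ha
  have hb0 : 0 ≤ b := dist_nonneg.trans hb
  obtain rfl | hxy := eq_or_ne x y
  · simp only [sqDistDefect, dist_self, ne_eq, OfNat.ofNat_ne_zero, not_false_eq_true,
      zero_pow, sub_self, abs_zero]
    positivity
  have hd : dist (f x) (f y) - dist x y = (expans f x y - 1) * dist x y := by
    rw [dist_eq_expans_mul f (dist_ne_zero.mpr hxy)]; ring
  calc sqDistDefect f x y
      = |expans f x y - 1| * dist x y * (dist (f x) (f y) + dist x y) := by
        rw [sqDistDefect, sq_sub_sq, abs_mul, hd, abs_mul, abs_of_nonneg dist_nonneg,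
          abs_of_nonneg (add_nonneg dist_nonneg dist_nonneg)]
        ring
    _ ≤ |expans f x y - 1| * (a * (b + a)) := by
        rw [mul_assoc]
        gcongr

lemma sum_sqDistDefect_le [MetricSpace α] [PseudoMetricSpace β] [DecidableEq α] (f : α → β)
    {o : α} {J : Finset α} {a b : ℝ} (ha : ∀ w ∈ J, dist o w ≤ a)
    (hb : ∀ w ∈ J, dist (f o) (f w) ≤ b) :
    ∑ w ∈ J, sqDistDefect f o w ≤ a * (b + a) * ∑ w ∈ J.erase o, |expans f o w - 1| := by
  rw [← sum_erase J (show sqDistDefect f o o = 0 by simp [sqDistDefect]), mul_sum]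
  refine sum_le_sum fun w hw => ?_
  have hwJ := mem_of_mem_erase hw
  linarith [sqDistDefect_le f (ha w hwJ) (hb w hwJ)]

lemma sum_offDiag_sqDistDefect_le [MetricSpace α] [PseudoMetricSpace β] (f : α → β)
    {J : Finset α} {a b : ℝ} (ha : ∀ u ∈ J, ∀ v ∈ J, dist u v ≤ a)
    (hb : ∀ u ∈ J, ∀ v ∈ J, dist (f u) (f v) ≤ b) :
    ∑ p ∈ J.offDiag, sqDistDefect f p.1 p.2
      ≤ a * (b + a) * ∑ p ∈ J.offDiag, |expans f p.1 p.2 - 1| := by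
  rw [mul_sum]
  refine sum_le_sum fun p hp => ?_
  obtain ⟨hu, hv, -⟩ := mem_offDiag.mp hp
  linarith [sqDistDefect_le f (ha _ hu _ hv) (hb _ hu _ hv)]

end Expansion

section InnerProduct

variable {E F : Type*} [NormedAddCommGroup E] [InnerProductSpace ℝ E]
  [NormedAddCommGroup F] [InnerProductSpace ℝ F]

omit [NormedAddCommGroup F] [InnerProductSpace ℝ F] in
lemma real_inner_sub_sub_eq_dist_sq (a b c : E) :
    inner ℝ (a - c) (b - c) = (dist c a ^ 2 + dist c b ^ 2 - dist a b ^ 2) / 2 := by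
  have h := norm_sub_sq_real (a - c) (b - c)
  rw [sub_sub_sub_cancel_right] at h
  rw [dist_comm c a, dist_comm c b, dist_eq_norm, dist_eq_norm, dist_eq_norm]
  linarith

lemma abs_inner_sub_inner_le_sqDistDefect (g : E → F) (o u v : E) :
    |inner ℝ (g u - g o) (g v - g o) - inner ℝ (u - o) (v - o)|
      ≤ (sqDistDefect g o u + sqDistDefect g o v + sqDistDefect g u v) / 2 := by
  have h := abs_add_three (dist (g o) (g u) ^ 2 - dist o u ^ 2)
    (dist (g o) (g v) ^ 2 - dist o v ^ 2) (-(dist (g u) (g v) ^ 2 - dist u v ^ 2))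
  rw [abs_neg] at h
  rw [real_inner_sub_sub_eq_dist_sq, real_inner_sub_sub_eq_dist_sq, ← sub_div, abs_div, abs_two]
  gcongr
  exact (congrArg abs (by ring)).trans_le h

omit [NormedAddCommGroup F] [InnerProductSpace ℝ F] in
lemma abs_inner_sub_sub_inner_le {o u v : E} {r : ℝ} (hu : ‖u‖ ≤ 1) (hv : ‖v‖ ≤ 1)
    (ho : ‖o‖ ≤ r) : |inner ℝ (u - o) (v - o) - inner ℝ u v| ≤ r * (2 + r) := by
  have hr : 0 ≤ r := (norm_nonneg o).trans ho
  have huo : |inner ℝ u o| ≤ r := (abs_real_inner_le_norm u o).trans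
    (by nlinarith [norm_nonneg u, norm_nonneg o])
  have hov : |inner ℝ o v| ≤ r := (abs_real_inner_le_norm o v).trans
    (by nlinarith [norm_nonneg v, norm_nonneg o])
  have hoo : ‖o‖ ^ 2 ≤ r ^ 2 := pow_le_pow_left₀ (norm_nonneg o) ho 2
  have expand : inner ℝ (u - o) (v - o) - inner ℝ u v = ‖o‖ ^ 2 - inner ℝ u o - inner ℝ o v := by
    simp only [inner_sub_left, inner_sub_right, real_inner_self_eq_norm_sq]
    ring
  rw [expand, abs_le]
  constructor <;> nlinarith [abs_le.mp huo, abs_le.mp hov, sq_nonneg ‖o‖]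

lemma sum_offDiag_abs_inner_sub_inner_le (g : E → F) {o : E} {J : Finset E} {r : ℝ}
    (hJ : ∀ v ∈ J, ‖v‖ ≤ 1) (ho : ‖o‖ ≤ r) :
    ∑ p ∈ J.offDiag, |inner ℝ (g p.1 - g o) (g p.2 - g o) - inner ℝ p.1 p.2|
      ≤ (#J - 1 : ℝ) * ∑ w ∈ J, sqDistDefect g o w
        + (∑ p ∈ J.offDiag, sqDistDefect g p.1 p.2) / 2 + #J * (#J - 1 : ℝ) * (r * (2 + r)) :=
  calc _ ≤ ∑ p ∈ J.offDiag, ((sqDistDefect g o p.1 + sqDistDefect g o p.2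
          + sqDistDefect g p.1 p.2) / 2 + r * (2 + r)) := by
        refine sum_le_sum fun p hp => ?_
        obtain ⟨hu, hv, -⟩ := mem_offDiag.mp hp
        exact (abs_sub_le _ (inner ℝ (p.1 - o) (p.2 - o)) _).trans (add_le_add
          (abs_inner_sub_inner_le_sqDistDefect g o p.1 p.2)
          (abs_inner_sub_sub_inner_le (hJ _ hu) (hJ _ hv) ho))
    _ = _ := by
        simp only [sum_add_distrib, add_div, ← sum_div, sum_offDiag_fst, sum_offDiag_snd,
          sum_const, cast_card_offDiag, nsmul_eq_mul]
        ring

lemma sum_offDiag_abs_inner_sub_inner_le_of_expans [DecidableEq E] (g : E → F) {o : E}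
    {J : Finset E} {r s M R T : ℝ} (hoJ : o ∈ J) (hJ : ∀ v ∈ J, ‖v‖ ≤ 1) (ho : ‖o‖ ≤ r)
    (hs : ∀ u ∈ J, ∀ v ∈ J, dist u v ≤ s) (hM : ∀ v ∈ J, ‖g v - g o‖ ≤ M)
    (hrow : ∑ v ∈ J.erase o, |expans g o v - 1| ≤ R)
    (htotal : ∑ p ∈ J.offDiag, |expans g p.1 p.2 - 1| ≤ T) :
    ∑ p ∈ J.offDiag, |inner ℝ (g p.1 - g o) (g p.2 - g o) - inner ℝ p.1 p.2|
      ≤ (#J - 1 : ℝ) * ((1 + r) * (M + (1 + r)) * R) + s * (2 * M + s) * T / 2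
        + #J * (#J - 1 : ℝ) * (r * (2 + r)) := by
  have hdist_o : ∀ v ∈ J, dist o v ≤ 1 + r := fun v hv =>
    (dist_le_norm_add_norm o v).trans (by linarith [hJ v hv])
  have hdist_go : ∀ v ∈ J, dist (g o) (g v) ≤ M := fun v hv => by
    rw [dist_comm, dist_eq_norm]
    exact hM v hv
  have hdist_g : ∀ u ∈ J, ∀ v ∈ J, dist (g u) (g v) ≤ 2 * M := fun u hu v hv => by
    linarith [dist_triangle_left (g u) (g v) (g o), hdist_go u hu, hdist_go v hv]
  have hr0 : 0 ≤ r := (norm_nonneg o).trans ho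
  have hM0 : 0 ≤ M := (norm_nonneg _).trans (hM o hoJ)
  have hs0 : 0 ≤ s := dist_nonneg.trans (hs o hoJ o hoJ)
  refine (sum_offDiag_abs_inner_sub_inner_le g hJ ho).trans ?_
  gcongr ?_ * ?_ + ?_ / 2 + _
  · exact sub_nonneg.mpr (by exact_mod_cast card_pos.mpr ⟨o, hoJ⟩)
  · exact (sum_sqDistDefect_le g hdist_o hdist_go).trans (by gcongr)
  · exact (sum_offDiag_sqDistDefect_le g hs hdist_g).trans (by gcongr)

end InnerProduct

section Arithmetic

variable {ε α : ℝ}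

lemma one_add_three_mul_div_mul_le (hε0 : 0 < ε) (hε : ε ≤ 1 / 36) (hα0 : 0 < α)
    (hα : α ≤ 1 / 16) :
    (1 + 3 * ε / α) * (1 + ε / 100) ≤ 1 + 3.01 * ε / α := by
  rw [← mul_le_mul_iff_left₀ hα0]
  have e1 : 3 * ε / α * α = 3 * ε := div_mul_cancel₀ _ hα0.ne'
  have e2 : 3.01 * ε / α * α = 3.01 * ε := div_mul_cancel₀ _ hα0.ne'
  nlinarith [mul_pos hε0 hα0]

lemma mul_sub_one_le_six_fifths_mul {N m : ℝ} (hN : 21 ≤ N) (hm : 15 / 16 * N ≤ m) :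
    N * (N - 1) ≤ 6 / 5 * (m * (m - 1)) := by
  nlinarith [mul_nonneg (by linarith : (0 : ℝ) ≤ m - 15 / 16 * N) (by linarith : (0 : ℝ) ≤ m)]

lemma inner_error_constant_le (hε0 : 0 < ε) (hε : ε ≤ 1 / 36) (hα0 : 0 < α) :
    16 / 5 * ε * ((1 + ε / 100) * ((1 + 3.01 * ε / α) + (1 + ε / 100)))
      + 3 / 5 * (√2 * (2 * (1 + 3.01 * ε / α) + √2)) * ε + ε / 100 * (2 + ε / 100)
    ≤ (10 + 1 / (2 * α)) * ε := by
  have hsqrt : √2 ≤ 1.4143 := by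
    rw [Real.sqrt_le_left (by norm_num)]
    norm_num
  have hsq : √2 * √2 = 2 := Real.mul_self_sqrt (by norm_num)
  have hs0 : 0 ≤ √2 := Real.sqrt_nonneg 2
  set x := ε / α with hx
  have hx0 : 0 ≤ x := by positivity
  have hM : 3.01 * ε / α = 3.01 * x := by rw [hx]; ring
  have hrhs : (10 + 1 / (2 * α)) * ε = 10 * ε + x / 2 := by rw [hx]; field_simp
  rw [hM, hrhs]
  nlinarith [mul_nonneg hε0.le hx0, mul_le_mul_of_nonneg_right hε hx0,
    mul_le_mul_of_nonneg_left hsqrt (mul_nonneg hε0.le hx0),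
    mul_le_mul_of_nonneg_left hsqrt hε0.le, mul_nonneg (mul_nonneg hε0.le hε0.le) hx0]

lemma inner_error_budget_le {N m : ℝ} (hε0 : 0 < ε) (hε : ε ≤ 1 / 36) (hα0 : 0 < α)
    (hα : α ≤ 1 / 16) (hN : 21 ≤ N) (hm : (1 - α) * N ≤ m) :
    (m - 1) * ((1 + ε / 100) * ((1 + 3.01 * ε / α) + (1 + ε / 100)) * (3 * ε * (N - 1)))
      + √2 * (2 * (1 + 3.01 * ε / α) + √2) * (ε * (N * (N - 1))) / 2
      + m * (m - 1) * (ε / 100 * (2 + ε / 100))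
    ≤ (10 + 1 / (2 * α)) * ε * (m * (m - 1)) := by
  have hm' : 15 / 16 * N ≤ m := by nlinarith
  have hrow : (m - 1) * (N - 1) ≤ 16 / 15 * (m * (m - 1)) := by nlinarith
  have htotal := mul_sub_one_le_six_fifths_mul hN hm'
  have hmm : 0 ≤ m * (m - 1) := mul_nonneg (by linarith) (by linarith)
  set D := 1 + ε / 100
  set M := 1 + 3.01 * ε / α
  calc _ = 3 * ε * (D * (M + D)) * ((m - 1) * (N - 1)) + √2 * (2 * M + √2) * ε / 2 * (N * (N - 1))
        + m * (m - 1) * (ε / 100 * (2 + ε / 100)) := by ring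
    _ ≤ 3 * ε * (D * (M + D)) * (16 / 15 * (m * (m - 1)))
        + √2 * (2 * M + √2) * ε / 2 * (6 / 5 * (m * (m - 1)))
        + m * (m - 1) * (ε / 100 * (2 + ε / 100)) := by gcongr
    _ = (16 / 5 * ε * (D * (M + D)) + 3 / 5 * (√2 * (2 * M + √2)) * ε
        + ε / 100 * (2 + ε / 100)) * (m * (m - 1)) := by ring
    _ ≤ _ := by gcongr; exact inner_error_constant_le hε0 hε hα0

end Arithmetic

/-- Lemma 1 of the paper: existence of a point `o₀ ∈ O` and a large
subset `J ⊆ I` (the `Î` of the paper) mapped by `h(v) = f(v) - f(o₀)` into a ball of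
radius `1 + 3.01ε/α`, with average inner-product error at most `(10 + 1/(2α))·ε`. -/
theorem energy_ball_and_inner_product_lemma {d k : ℕ} (hd : 7 ≤ d)
    {ε : ℝ} (hε0 : 0 < ε) (hε : ε ≤ 1 / 36)
    (I O : Finset (EuclideanSpace ℝ (Fin d)))
    (hIcard : I.card = 3 * d)
    (hIball : ∀ x ∈ I, ‖x‖ ≤ 1)
    (hIdiam : ∀ u ∈ I, ∀ v ∈ I, dist u v ≤ Real.sqrt 2)
    (hOI : O ⊆ I) (hOcard : O.card = d)
    (hOnorm : ∀ o ∈ O, ‖o‖ ≤ ε / 100)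
    (f : EuclideanSpace ℝ (Fin d) → EuclideanSpace ℝ (Fin k))
    (hEnergy : energy I f 1 ≤ ε)
    {α : ℝ} (hα0 : 0 < α) (hα : α ≤ 1 / 16) :
    ∃ o₀ ∈ O, ∃ J ⊆ I,
      (1 - α) * (I.card : ℝ) ≤ (J.card : ℝ) ∧
      (∀ v ∈ J, ‖f v - f o₀‖ ≤ 1 + 3.01 * ε / α) ∧
      (∑ p ∈ J.offDiag,
          |(inner ℝ (f p.1 - f o₀) (f p.2 - f o₀) : ℝ) - (inner ℝ p.1 p.2 : ℝ)|) /
        ((J.card : ℝ) * ((J.card : ℝ) - 1)) ≤ (10 + 1 / (2 * α)) * ε := by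
  have hN : (21 : ℝ) ≤ #I := by exact_mod_cast (by omega : 21 ≤ #I)
  have htotal := sum_abs_expans_sub_one_le_of_energy_le (by omega) hEnergy
  obtain ⟨o₀, ho₀O, hrow⟩ := exists_mem_sum_erase_le_sum_offDiag_div hOI
    (card_pos.mp (by omega)) fun u v => abs_nonneg (expans f u v - 1)
  replace hrow : ∑ v ∈ I.erase o₀, |expans f o₀ v - 1| ≤ 3 * ε * (#I - 1 : ℝ) := by
    refine hrow.trans ((div_le_div_of_nonneg_right htotal (Nat.cast_nonneg _)).trans_eq ?_)
    rw [hOcard, hIcard]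
    field_simp
    push_cast
    ring
  obtain ⟨J, hJI, ho₀J, hJcard, hJdist⟩ := exists_subset_card_ge_dist_le f (hOI ho₀O)
    (a := 1 + ε / 100) (t := 3 * ε / α) (by positivity) fun v hv =>
      (dist_le_norm_add_norm o₀ v).trans (by linarith [hOnorm o₀ ho₀O, hIball v hv])
  have hcard : (1 - α) * #I ≤ (#J : ℝ) := by
    have : (∑ v ∈ I.erase o₀, |expans f o₀ v - 1|) / (3 * ε / α) ≤ α * (#I - 1) := by
      rw [div_le_iff₀ (by positivity)]
      exact hrow.trans_eq (by field_simp)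
    nlinarith
  have hnorm : ∀ v ∈ J, ‖f v - f o₀‖ ≤ 1 + 3.01 * ε / α := fun v hv => by
    rw [← dist_eq_norm, dist_comm]
    exact (hJdist v hv).trans (one_add_three_mul_div_mul_le hε0 hε hα0 hα)
  refine ⟨o₀, ho₀O, J, hJI, hcard, hnorm, ?_⟩
  have hJ2 : (2 : ℝ) ≤ #J := by nlinarith
  rw [div_le_iff₀ (by nlinarith)]
  refine (sum_offDiag_abs_inner_sub_inner_le_of_expans f ho₀J (fun v hv => hIball v (hJI hv))
    (hOnorm o₀ ho₀O) (fun u hu v hv => hIdiam u (hJI hu) v (hJI hv)) hnorm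
    ((sum_le_sum_of_subset_of_nonneg (erase_subset_erase o₀ hJI) fun _ _ _ =>
      abs_nonneg _).trans hrow)
    ((sum_le_sum_of_subset_of_nonneg (offDiag_mono hJI) fun _ _ _ =>
      abs_nonneg _).trans htotal)).trans ?_
  exact inner_error_budget_le hε0 hε hα0 hα hN hcard
end

section
/- Let q ≥ 3/ε and τ = e^{ε·q}. Let f : I → ℝ^k be an injective map with ℓ_q-dist(f) ≤ 1 + ε. Then there exist a point ô ∈ O and a subset Î ⊆ I with |Î| ≥ (1 − 3/τ⁴)·|I| such that, setting h(v) = f(v) − f(ô): ‖h(v)‖₂ ≤ 1 + 6.02·ε for every v ∈ Î, and the number of unordered pairs {u,v} of distinct points of Î with |⟨h(u),h(v)⟩ − ⟨u,v⟩| > 32·ε is at most (2/τ⁴)·C(|Î|,2). -/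
open scoped BigOperators
open scoped Classical

/-!
Put `t = (1 + ε)·e^{4ε}`, so that `t^q = (1 + ε)^q·τ⁴`. By Markov's inequality,
`ℓ_q-dist(f) ≤ 1 + ε` leaves at most `|I|(|I| - 1)/τ⁴` ordered pairs with `dist_f > t`.
Averaging over the `d = |I|/3` points of `O`, some `ô ∈ O` has at most `3|I|/τ⁴` such bad
partners; `Î` is the set of its good partners, and since `τ⁴ ≥ 256` it is so large that
`|I|(|I| - 1) ≤ 2|Î|(|Î| - 1)`. As `ô` lies almost at the origin, `h = f - f(ô)` nearly
preserves the norms of the points of `Î`, so by polarization,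
`⟨x, y⟩ = (‖x‖² + ‖y‖² - ‖x - y‖²)/2`, only bad pairs can have a large inner-product error.
-/

open Finset
open scoped InnerProductSpace

section PairDistortion

variable {α β : Type*}

lemma pairDist_nonneg [PseudoMetricSpace α] [PseudoMetricSpace β] (f : α → β) (u v : α) :
    0 ≤ pairDist f u v :=
  (div_nonneg dist_nonneg dist_nonneg).trans (le_max_left _ _)

lemma pairDist_comm [PseudoMetricSpace α] [PseudoMetricSpace β] (f : α → β) (u v : α) :
    pairDist f u v = pairDist f v u := by
  simp only [pairDist, expans, dist_comm]

@[simp]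
lemma pairDist_self [PseudoMetricSpace α] [PseudoMetricSpace β] (f : α → β) (u : α) :
    pairDist f u u = 0 := by
  simp [pairDist, expans]

lemma abs_dist_sub_dist_le_of_pairDist_le [MetricSpace α] [MetricSpace β] {f : α → β}
    {s : Set α} {u v : α} {t : ℝ} (hf : Set.InjOn f s) (hu : u ∈ s) (hv : v ∈ s)
    (hp : pairDist f u v ≤ t) :
    |dist (f u) (f v) - dist u v| ≤ (t - 1) * dist u v := by
  rcases eq_or_ne u v with rfl | huv
  · simp
  have hE : 0 < dist u v := dist_pos.2 huv
  have hD : 0 < dist (f u) (f v) := dist_pos.2 fun h => huv (hf hu hv h)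
  rw [pairDist, max_le_iff, expans, inv_div, div_le_iff₀ hE, div_le_iff₀ hD] at hp
  rw [abs_le]
  constructor <;> nlinarith [sq_nonneg (t - 1)]

lemma sum_pairDist_rpow_le_of_lqDist_le [PseudoMetricSpace α] [PseudoMetricSpace β]
    [DecidableEq α] {X : Finset α} {f : α → β} {q L : ℝ} (hq : 0 < q) (hX : 2 ≤ #X)
    (hL : lqDist X f q ≤ L) :
    ∑ p ∈ X.offDiag, pairDist f p.1 p.2 ^ q ≤ L ^ q * (#X * (#X - 1)) := by
  have hN : (0 : ℝ) < #X * (#X - 1) := by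
    have : (2 : ℝ) ≤ #X := by exact_mod_cast hX
    nlinarith
  have hS : 0 ≤ (∑ p ∈ X.offDiag, pairDist f p.1 p.2 ^ q) / (#X * (#X - 1)) :=
    div_nonneg (sum_nonneg fun p _ => Real.rpow_nonneg (pairDist_nonneg f _ _) q) hN.le
  rw [← div_le_iff₀ hN]
  calc (∑ p ∈ X.offDiag, pairDist f p.1 p.2 ^ q) / (#X * (#X - 1)) = lqDist X f q ^ q := by
        rw [lqDist, ← Real.rpow_mul hS, one_div_mul_cancel hq.ne', Real.rpow_one]
    _ ≤ L ^ q := Real.rpow_le_rpow (Real.rpow_nonneg hS _) hL hq.le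

lemma card_filter_lt_pairDist_mul_rpow_le [PseudoMetricSpace α] [PseudoMetricSpace β]
    [DecidableEq α] (X : Finset α) (f : α → β) {q t : ℝ} (hq : 0 ≤ q) (ht : 0 ≤ t) :
    #(X.offDiag.filter fun p => t < pairDist f p.1 p.2) * t ^ q
      ≤ ∑ p ∈ X.offDiag, pairDist f p.1 p.2 ^ q := by
  calc #(X.offDiag.filter fun p => t < pairDist f p.1 p.2) * t ^ q
      = ∑ _p ∈ X.offDiag.filter fun p => t < pairDist f p.1 p.2, t ^ q := by
        rw [sum_const, nsmul_eq_mul]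
    _ ≤ ∑ p ∈ X.offDiag.filter fun p => t < pairDist f p.1 p.2, pairDist f p.1 p.2 ^ q :=
        sum_le_sum fun p hp => Real.rpow_le_rpow ht (mem_filter.1 hp).2.le hq
    _ ≤ ∑ p ∈ X.offDiag, pairDist f p.1 p.2 ^ q :=
        sum_le_sum_of_subset_of_nonneg (filter_subset _ _)
          fun p _ _ => Real.rpow_nonneg (pairDist_nonneg f _ _) q

lemma card_filter_lt_pairDist_mul_rpow_le_of_lqDist_le [PseudoMetricSpace α]
    [PseudoMetricSpace β] [DecidableEq α] {X : Finset α} {f : α → β} {q L r : ℝ} (hq : 0 < q)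
    (hX : 2 ≤ #X) (hL0 : 0 < L) (hL : lqDist X f q ≤ L) (hr : 0 ≤ r) :
    #(X.offDiag.filter fun p => L * r < pairDist f p.1 p.2) * r ^ q ≤ #X * (#X - 1) := by
  have h := (card_filter_lt_pairDist_mul_rpow_le X f hq.le (mul_nonneg hL0.le hr)).trans
    (sum_pairDist_rpow_le_of_lqDist_le hq hX hL)
  rw [Real.mul_rpow hL0.le hr, mul_left_comm] at h
  exact le_of_mul_le_mul_left h (Real.rpow_pos_of_pos hL0 q)

end PairDistortion

lemma Finset.exists_mem_card_mul_card_filter_le {α : Type*} [DecidableEq α] {X O : Finset α}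
    (hO : O.Nonempty) (hOX : O ⊆ X) (R : α → α → Prop) [DecidableRel R] (hR : ∀ x, ¬ R x x) :
    ∃ o ∈ O, #O * #(X.filter (R o)) ≤ #(X.offDiag.filter fun p => R p.1 p.2) := by
  have hsum : ∑ o ∈ O, #(X.filter (R o)) ≤ #(X.offDiag.filter fun p => R p.1 p.2) := by
    rw [← card_sigma]
    refine card_le_card_of_injOn (fun x => (x.1, x.2)) (fun x hx => ?_) ?_
    · simp only [mem_coe, mem_sigma, mem_filter, mem_offDiag] at hx ⊢
      exact ⟨⟨hOX hx.1, hx.2.1, fun h => hR x.2 (h ▸ hx.2.2)⟩, hx.2.2⟩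
    · rintro ⟨o, v⟩ - ⟨o', v'⟩ - h
      simp_all
  apply exists_le_of_sum_le hO
  rw [← mul_sum, sum_const, smul_eq_mul]
  exact Nat.mul_le_mul_left _ hsum

lemma mul_sub_one_le_two_mul_mul_sub_one {n j m : ℝ} (hjm : j + m = n) (hn : 2 ≤ n)
    (hm0 : 0 ≤ m) (hm : m * 256 ≤ 3 * n) : n * (n - 1) ≤ 2 * (j * (j - 1)) := by
  nlinarith

lemma exists_mem_card_filter_pairDist_le {α β : Type*} [PseudoMetricSpace α]
    [PseudoMetricSpace β] [DecidableEq α] {X O : Finset α} {f : α → β} {q L r : ℝ}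
    (hO : O.Nonempty) (hOX : O ⊆ X) (hXO : #X = 3 * #O) (hq : 0 < q) (hL0 : 0 < L)
    (hL : lqDist X f q ≤ L) (hr : 0 ≤ r) (hτ : 256 ≤ r ^ q) :
    ∃ o ∈ O, (1 - 3 / r ^ q) * #X ≤ #(X.filter fun v => pairDist f o v ≤ L * r) ∧
      #(X.offDiag.filter fun p => L * r < pairDist f p.1 p.2) * r ^ q ≤
        2 * (#(X.filter fun v => pairDist f o v ≤ L * r) *
          (#(X.filter fun v => pairDist f o v ≤ L * r) - 1)) := by
  have hO1 : (1 : ℝ) ≤ #O := by exact_mod_cast hO.card_pos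
  have hX : (#X : ℝ) = 3 * #O := by exact_mod_cast hXO
  have hB := card_filter_lt_pairDist_mul_rpow_le_of_lqDist_le hq (by have := hO.card_pos; omega)
    hL0 hL hr
  obtain ⟨o, ho, hm⟩ := exists_mem_card_mul_card_filter_le hO hOX
    (fun u v => L * r < pairDist f u v)
    (fun x => by simpa using mul_nonneg hL0.le hr)
  set m := #(X.filter fun v => L * r < pairDist f o v)
  set J := X.filter fun v => pairDist f o v ≤ L * r
  have hJm : (#J : ℝ) + m = #X := by
    exact_mod_cast (by simpa only [not_le] using
      card_filter_add_card_filter_not (s := X) (fun v => pairDist f o v ≤ L * r))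
  have hmτ : (m : ℝ) * r ^ q ≤ 3 * #X := by
    have hOm : (#O : ℝ) * m ≤ #(X.offDiag.filter fun p => L * r < pairDist f p.1 p.2) := by
      exact_mod_cast hm
    rw [hX] at hB ⊢
    nlinarith
  refine ⟨o, ho, ?_, hB.trans (mul_sub_one_le_two_mul_mul_sub_one hJm (by linarith)
    (Nat.cast_nonneg _) (by nlinarith))⟩
  have : (m : ℝ) ≤ 3 * #X / r ^ q := by rwa [le_div_iff₀ (by linarith)]
  rw [sub_mul, one_mul, div_mul_eq_mul_div]
  linarith

lemma abs_sq_sub_sq_le {a b δ M : ℝ} (ha : 0 ≤ a) (hb : 0 ≤ b) (h : |a - b| ≤ δ)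
    (hM : a + b ≤ M) : |a ^ 2 - b ^ 2| ≤ δ * M := by
  rw [sq_sub_sq, abs_mul, abs_of_nonneg (add_nonneg ha hb), mul_comm]
  exact mul_le_mul h hM (add_nonneg ha hb) ((abs_nonneg _).trans h)

lemma abs_inner_sub_inner_le {E F : Type*} [NormedAddCommGroup E] [InnerProductSpace ℝ E]
    [NormedAddCommGroup F] [InnerProductSpace ℝ F] (x y : F) (u v : E) {δ c R r s : ℝ}
    (hx : |‖x‖ - ‖u‖| ≤ δ) (hy : |‖y‖ - ‖v‖| ≤ δ)
    (hxy : |‖x - y‖ - ‖u - v‖| ≤ c * ‖u - v‖) (hc : 0 ≤ c)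
    (hxR : ‖x‖ ≤ R) (hyR : ‖y‖ ≤ R) (hu : ‖u‖ ≤ r) (hv : ‖v‖ ≤ r) (huv : ‖u - v‖ ≤ s) :
    |⟪x, y⟫_ℝ - ⟪u, v⟫_ℝ| ≤ δ * (R + r) + c * (2 + c) * s ^ 2 / 2 := by
  have hpol : ⟪x, y⟫_ℝ - ⟪u, v⟫_ℝ
      = ((‖x‖ ^ 2 - ‖u‖ ^ 2) + (‖y‖ ^ 2 - ‖v‖ ^ 2) - (‖x - y‖ ^ 2 - ‖u - v‖ ^ 2)) / 2 := by
    rw [real_inner_eq_norm_mul_self_add_norm_mul_self_sub_norm_sub_mul_self_div_two x y,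
      real_inner_eq_norm_mul_self_add_norm_mul_self_sub_norm_sub_mul_self_div_two u v]
    ring
  have hX := abs_sq_sub_sq_le (norm_nonneg x) (norm_nonneg u) hx (add_le_add hxR hu)
  have hY := abs_sq_sub_sq_le (norm_nonneg y) (norm_nonneg v) hy (add_le_add hyR hv)
  have hXY : |‖x - y‖ ^ 2 - ‖u - v‖ ^ 2| ≤ c * (2 + c) * s ^ 2 := by
    have hsum : ‖x - y‖ + ‖u - v‖ ≤ (2 + c) * ‖u - v‖ := by linarith [(abs_le.1 hxy).2]
    have hs : ‖u - v‖ ^ 2 ≤ s ^ 2 := pow_le_pow_left₀ (norm_nonneg _) huv 2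
    calc |‖x - y‖ ^ 2 - ‖u - v‖ ^ 2| ≤ c * ‖u - v‖ * ((2 + c) * ‖u - v‖) :=
          abs_sq_sub_sq_le (norm_nonneg _) (norm_nonneg _) hxy hsum
      _ = c * (2 + c) * ‖u - v‖ ^ 2 := by ring
      _ ≤ c * (2 + c) * s ^ 2 := by gcongr
  rw [hpol, abs_div, abs_two, div_le_iff₀ two_pos]
  calc |‖x‖ ^ 2 - ‖u‖ ^ 2 + (‖y‖ ^ 2 - ‖v‖ ^ 2) - (‖x - y‖ ^ 2 - ‖u - v‖ ^ 2)|
      ≤ |‖x‖ ^ 2 - ‖u‖ ^ 2| + |‖y‖ ^ 2 - ‖v‖ ^ 2| + |‖x - y‖ ^ 2 - ‖u - v‖ ^ 2| :=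
        (abs_sub _ _).trans (add_le_add_left (abs_add_le _ _) _)
    _ ≤ _ := by linarith

lemma one_add_mul_exp_four_mul_le {ε : ℝ} (hε0 : 0 ≤ ε) (hε : ε ≤ 1 / 36) :
    (1 + ε) * Real.exp (4 * ε) ≤ 1 + 45 / 8 * ε := by
  have hexp : Real.exp (4 * ε) ≤ 1 + 9 / 2 * ε := by
    refine (Real.exp_bound_div_one_sub_of_interval (by linarith) (by linarith)).trans ?_
    rw [div_le_iff₀ (by linarith)]
    nlinarith
  nlinarith

lemma mul_one_add_div_hundred_le {ε t : ℝ} (hε0 : 0 < ε) (hε : ε ≤ 1 / 36)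
    (ht : t ≤ 1 + 45 / 8 * ε) : t * (1 + ε / 100) ≤ 1 + 6.02 * ε := by
  nlinarith

section NearIsometry

variable {E F : Type*} [NormedAddCommGroup E] [NormedAddCommGroup F] {f : E → F} {s : Set E}
  {o u v : E} {t η : ℝ}

lemma abs_norm_map_sub_map_sub_norm_sub_le (hf : Set.InjOn f s) (hu : u ∈ s) (hv : v ∈ s)
    (hp : pairDist f u v ≤ t) : |‖f u - f v‖ - ‖u - v‖| ≤ (t - 1) * ‖u - v‖ := by
  simpa only [dist_eq_norm] using abs_dist_sub_dist_le_of_pairDist_le hf hu hv hp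

lemma norm_map_sub_map_le (hf : Set.InjOn f s) (ho : o ∈ s) (hv : v ∈ s)
    (hp : pairDist f o v ≤ t) (hon : ‖o‖ ≤ η) (hv1 : ‖v‖ ≤ 1) :
    ‖f v - f o‖ ≤ t * (1 + η) := by
  rw [pairDist_comm] at hp
  have ht : 0 ≤ t := (pairDist_nonneg f v o).trans hp
  have hvo : ‖v - o‖ ≤ 1 + η := (norm_sub_le v o).trans (add_le_add hv1 hon)
  have := (abs_le.1 (abs_norm_map_sub_map_sub_norm_sub_le hf hv ho hp)).2
  nlinarith [norm_nonneg (v - o)]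

lemma abs_norm_map_sub_map_sub_norm_le (hf : Set.InjOn f s) (ho : o ∈ s) (hv : v ∈ s)
    (hp : pairDist f o v ≤ t) (ht : 1 ≤ t) (hon : ‖o‖ ≤ η) (hv1 : ‖v‖ ≤ 1) :
    |‖f v - f o‖ - ‖v‖| ≤ (t - 1) * (1 + η) + η := by
  rw [pairDist_comm] at hp
  have hvo : ‖v - o‖ ≤ 1 + η := (norm_sub_le v o).trans (add_le_add hv1 hon)
  have hshift : |‖v - o‖ - ‖v‖| ≤ η := (abs_norm_sub_norm_le (v - o) v).trans (by simpa using hon)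
  calc |‖f v - f o‖ - ‖v‖| ≤ |‖f v - f o‖ - ‖v - o‖| + |‖v - o‖ - ‖v‖| := abs_sub_le _ _ _
    _ ≤ (t - 1) * (1 + η) + η :=
      add_le_add ((abs_norm_map_sub_map_sub_norm_sub_le hf hv ho hp).trans
        (mul_le_mul_of_nonneg_left hvo (by linarith))) hshift

lemma abs_inner_map_sub_map_sub_inner_le [InnerProductSpace ℝ E] [InnerProductSpace ℝ F]
    {ε : ℝ} (hε0 : 0 < ε) (hε : ε ≤ 1 / 36) (ht1 : 1 ≤ t) (ht : t ≤ 1 + 45 / 8 * ε)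
    (hf : Set.InjOn f s) (ho : o ∈ s) (hu : u ∈ s) (hv : v ∈ s) (hon : ‖o‖ ≤ ε / 100)
    (hu1 : ‖u‖ ≤ 1) (hv1 : ‖v‖ ≤ 1) (huv : ‖u - v‖ ≤ √2) (hpu : pairDist f o u ≤ t)
    (hpv : pairDist f o v ≤ t) (hpuv : pairDist f u v ≤ t) :
    |⟪f u - f o, f v - f o⟫_ℝ - ⟪u, v⟫_ℝ| ≤ 32 * ε := by
  have hR := mul_one_add_div_hundred_le hε0 hε ht
  have hxy := abs_norm_map_sub_map_sub_norm_sub_le hf hu hv hpuv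
  rw [← sub_sub_sub_cancel_right (f u) (f v) (f o)] at hxy
  refine (abs_inner_sub_inner_le _ _ u v
    (abs_norm_map_sub_map_sub_norm_le hf ho hu hpu ht1 hon hu1)
    (abs_norm_map_sub_map_sub_norm_le hf ho hv hpv ht1 hon hv1) hxy (by linarith)
    ((norm_map_sub_map_le hf ho hu hpu hon hu1).trans hR)
    ((norm_map_sub_map_le hf ho hv hpv hon hv1).trans hR) hu1 hv1 huv).trans ?_
  rw [Real.sq_sqrt zero_le_two]
  nlinarith [mul_le_mul ht ht (by linarith) (by linarith : (0 : ℝ) ≤ 1 + 45 / 8 * ε)]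

end NearIsometry

/-- Lemma 3 of the paper: for `ℓ_q`-distortion at most `1+ε`
(with `q ≥ 3/ε`, `τ = e^{εq}`), a point `o₀ ∈ O` and subset `J ⊆ I` of size at least
`(1 − 3/τ⁴)|I|` with images in a ball of radius `1 + 6.02ε`, and at most a `2/τ⁴`
fraction of pairs with inner-product error exceeding `32ε`. -/
theorem lq_ball_and_inner_product_lemma {d k : ℕ} (hd : 7 ≤ d)
    {ε q : ℝ} (hε0 : 0 < ε) (hε : ε ≤ 1 / 36) (hq : 3 / ε ≤ q)
    (I O : Finset (EuclideanSpace ℝ (Fin d)))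
    (hIcard : I.card = 3 * d)
    (hIball : ∀ x ∈ I, ‖x‖ ≤ 1)
    (hIdiam : ∀ u ∈ I, ∀ v ∈ I, dist u v ≤ Real.sqrt 2)
    (hOI : O ⊆ I) (hOcard : O.card = d)
    (hOnorm : ∀ o ∈ O, ‖o‖ ≤ ε / 100)
    (f : EuclideanSpace ℝ (Fin d) → EuclideanSpace ℝ (Fin k))
    (hfinj : Set.InjOn f ↑I)
    (hdist : lqDist I f q ≤ 1 + ε) :
    ∃ o₀ ∈ O, ∃ J ⊆ I,
      (1 - 3 / Real.exp (ε * q) ^ 4) * (I.card : ℝ) ≤ (J.card : ℝ) ∧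
      (∀ v ∈ J, ‖f v - f o₀‖ ≤ 1 + 6.02 * ε) ∧
      ((J.offDiag.filter fun p =>
          32 * ε <
            |(inner ℝ (f p.1 - f o₀) (f p.2 - f o₀) : ℝ) - (inner ℝ p.1 p.2 : ℝ)|).card : ℝ)
        ≤ (2 / Real.exp (ε * q) ^ 4) * ((J.card : ℝ) * ((J.card : ℝ) - 1)) := by
  have hq0 : 0 < q := (by positivity : 0 < 3 / ε).trans_le hq
  have hτ : Real.exp (4 * ε) ^ q = Real.exp (ε * q) ^ 4 := by
    rw [← Real.exp_mul, ← Real.exp_nat_mul]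
    ring_nf
  have hτ256 : 256 ≤ Real.exp (ε * q) ^ 4 := by
    have hεq : 3 ≤ ε * q := by rwa [div_le_iff₀ hε0, mul_comm] at hq
    have : 4 ≤ Real.exp (ε * q) := by linarith [Real.add_one_le_exp (ε * q)]
    nlinarith [pow_le_pow_left₀ (by norm_num) this 4]
  have ht1 : 1 ≤ (1 + ε) * Real.exp (4 * ε) :=
    one_le_mul_of_one_le_of_one_le (by linarith) (Real.one_le_exp (by linarith))
  have ht := one_add_mul_exp_four_mul_le hε0.le hε
  obtain ⟨o₀, ho₀, hJ, hB⟩ := exists_mem_card_filter_pairDist_le (card_pos.1 (by omega)) hOI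
    (by rw [hIcard, hOcard]) hq0 (by linarith) hdist (Real.exp_nonneg _) (hτ ▸ hτ256)
  rw [hτ] at hJ hB
  refine ⟨o₀, ho₀, _, filter_subset _ _, hJ, fun v hv => ?_, ?_⟩
  · obtain ⟨hvI, hpv⟩ := mem_filter.1 hv
    exact (norm_map_sub_map_le hfinj (hOI ho₀) hvI hpv (hOnorm o₀ ho₀) (hIball v hvI)).trans
      (mul_one_add_div_hundred_le hε0 hε ht)
  rw [div_mul_eq_mul_div, le_div_iff₀ (by positivity)]
  refine (mul_le_mul_of_nonneg_right (Nat.cast_le.2 (card_le_card fun p hp => ?_))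
    (by positivity)).trans hB
  simp only [mem_filter, mem_offDiag] at hp ⊢
  obtain ⟨⟨⟨hu, hpu⟩, ⟨hv, hpv⟩, hne⟩, hbad⟩ := hp
  refine ⟨⟨hu, hv, hne⟩, lt_of_not_ge fun hpuv => hbad.not_ge ?_⟩
  exact abs_inner_map_sub_map_sub_inner_le hε0 hε ht1 ht hfinj (hOI ho₀) hu hv (hOnorm o₀ ho₀)
    (hIball _ hu) (hIball _ hv) (by simpa only [dist_eq_norm] using hIdiam _ hu _ hv) hpu hpv hpuv
end

section
/- Let k ≥ 1, r > 0, δ > 0 with δ·√k ≤ r, and η ≥ 1, and let X ⊂ ℝ^k be a finite set with |X| ≥ 2 and ‖x‖₂ ≤ r for all x ∈ X. Then there exists a map g : X → δ·ℤ^k with ‖g(x) − x‖_∞ ≤ δ for every x ∈ X, such that the number of unordered pairs {u,v} of distinct points of X with |⟨g(u),g(v)⟩ − ⟨u,v⟩| > 3·√2·η·δ·r is at most 4·e^{−η²}·C(|X|,2). -/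
open scoped BigOperators
open scoped Classical

/-!
Round every coordinate of every point of `X` independently and without bias to one of the two
neighbouring points of `δℤ`. For `u ≠ v` write
`⟪g u, g v⟫ - ⟪u, v⟫ = ⟪g v, g u - u⟫ + ⟪u, g v - v⟫`. Given `g v`, which has norm at most
`r + δ√k ≤ 2r`, the first term is a weighted sum of independent centred variables with ranges of
length `δ`, and so is the second; by Hoeffding's inequality each exceeds its share `2√2ηδr`,
resp. `√2ηδr`, of the threshold with probability at most `2e^{-η²}`. So the expected number of bad
ordered pairs is at most `4e^{-η²}|X|(|X|-1)`, and some outcome does no worse than the expectation.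
-/

open MeasureTheory ProbabilityTheory Real

theorem ProbabilityTheory.HasSubgaussianMGF.mono {Ω : Type*} {mΩ : MeasurableSpace Ω}
    {μ : Measure Ω} {X : Ω → ℝ} {c d : NNReal} (h : HasSubgaussianMGF X c μ) (hcd : c ≤ d) :
    HasSubgaussianMGF X d μ :=
  ⟨h.integrable_exp_mul, fun t => (h.mgf_le t).trans (exp_le_exp.2 (by gcongr))⟩

section Hoeffding

variable {ι : Type*} [Fintype ι] {ν : ι → Measure ℝ} [∀ i, IsProbabilityMeasure (ν i)]
  {a : ι → ℝ} {δ : ℝ}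

theorem hasSubgaussianMGF_pi_sum_mul_sub_integral
    (hν : ∀ i, ∀ᵐ s ∂ν i, s ∈ Set.Icc (a i) (a i + δ)) (c : ι → ℝ) :
    HasSubgaussianMGF (fun ω => ∑ i, c i * (ω i - ∫ s, s ∂ν i))
      (δ ^ 2 / 4 * ∑ i, c i ^ 2).toNNReal (Measure.pi ν) := by
  rw [Finset.mul_sum, Real.toNNReal_sum_of_nonneg fun i _ => by positivity]
  refine HasSubgaussianMGF.sum_of_iIndepFun
    (iIndepFun_pi (X := fun i s => c i * (s - ∫ s, s ∂ν i)) fun i => by fun_prop) fun i _ => ?_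
  set m := ∫ s, s ∂ν i
  have hoeffding :
      HasSubgaussianMGF (fun s => c i * (s - m)) (δ ^ 2 / 4 * c i ^ 2).toNNReal (ν i) := by
    convert (hasSubgaussianMGF_of_mem_Icc (X := id) aemeasurable_id (hν i)).const_mul (c i)
      using 1
    · rfl
    · ext
      rw [add_sub_cancel_left, Real.coe_toNNReal _ (by positivity)]
      change _ = c i ^ 2 * ((‖δ‖₊ : ℝ) / 2) ^ 2
      rw [coe_nnnorm, Real.norm_eq_abs, div_pow, sq_abs]
      ring
  rw [← (measurePreserving_eval ν i).map_eq] at hoeffding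
  exact (hoeffding.of_map (measurePreserving_eval ν i).measurable.aemeasurable :)

theorem measureReal_lt_abs_pi_sum_mul_sub_integral_le
    (hν : ∀ i, ∀ᵐ s ∂ν i, s ∈ Set.Icc (a i) (a i + δ)) (c : ι → ℝ) {s C : ℝ} (hs : 0 ≤ s)
    (hC : ∑ i, c i ^ 2 ≤ C) :
    (Measure.pi ν).real {ω | s < |∑ i, c i * (ω i - ∫ x, x ∂ν i)|}
      ≤ 2 * exp (-2 * s ^ 2 / (δ ^ 2 * C)) := by
  have hsub := (hasSubgaussianMGF_pi_sum_mul_sub_integral hν c).mono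
    (d := (δ ^ 2 / 4 * C).toNNReal) (by gcongr)
  have hC0 : 0 ≤ δ ^ 2 / 4 * C :=
    mul_nonneg (by positivity) ((Finset.sum_nonneg fun i _ => sq_nonneg (c i)).trans hC)
  have htail : ∀ X : (ι → ℝ) → ℝ, HasSubgaussianMGF X (δ ^ 2 / 4 * C).toNNReal (Measure.pi ν) →
      (Measure.pi ν).real {ω | s ≤ X ω} ≤ exp (-2 * s ^ 2 / (δ ^ 2 * C)) := fun X hX => by
    refine (hX.measure_ge_le hs).trans_eq (congrArg exp ?_)
    rw [Real.coe_toNNReal _ hC0, show 2 * (δ ^ 2 / 4 * C) = δ ^ 2 * C / 2 by ring,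
      div_div_eq_mul_div]
    ring
  calc _ ≤ (Measure.pi ν).real ({ω | s ≤ ∑ i, c i * (ω i - ∫ x, x ∂ν i)} ∪
        {ω | s ≤ -∑ i, c i * (ω i - ∫ x, x ∂ν i)}) :=
        measureReal_mono fun ω (hω : s < |_|) => by
          rcases lt_abs.1 hω with h | h
          exacts [Or.inl h.le, Or.inr h.le]
    _ ≤ _ := (measureReal_union_le _ _).trans (by
          linarith [htail _ hsub, htail (fun ω => -∑ i, c i * (ω i - ∫ x, x ∂ν i)) hsub.neg])

end Hoeffding

theorem MeasureTheory.Measure.measureReal_prod_le_of_ae_slice_le {α β : Type*}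
    [MeasurableSpace α] [MeasurableSpace β] {μ : Measure α} {ν : Measure β} [IsFiniteMeasure μ]
    [IsProbabilityMeasure ν] {S : Set (α × β)} (hS : MeasurableSet S) {B : ℝ} (hB : 0 ≤ B)
    (h : ∀ᵐ b ∂ν, μ.real ((fun a => (a, b)) ⁻¹' S) ≤ B) : (μ.prod ν).real S ≤ B := by
  rw [measureReal_def, Measure.prod_apply_symm hS]
  refine ENNReal.toReal_le_of_le_ofReal hB ?_
  calc ∫⁻ b, μ ((fun a => (a, b)) ⁻¹' S) ∂ν ≤ ∫⁻ _, ENNReal.ofReal B ∂ν :=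
        lintegral_mono_ae <| h.mono fun b hb =>
          (ENNReal.le_ofReal_iff_toReal_le (measure_ne_top _ _) hB).2 hb
    _ = ENNReal.ofReal B := by simp

theorem MeasureTheory.Measure.map_pi_eval_prod_eval {ι : Type*} [Fintype ι] {α : ι → Type*}
    [∀ i, MeasurableSpace (α i)] (μ : ∀ i, Measure (α i)) [∀ i, IsProbabilityMeasure (μ i)]
    {u v : ι} (huv : u ≠ v) :
    (Measure.pi μ).map (fun ω => (ω u, ω v)) = (μ u).prod (μ v) := by
  have hindep : IndepFun (fun ω => ω u) (fun ω => ω v) (Measure.pi μ) :=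
    (iIndepFun_pi (X := fun _ => id) fun _ => aemeasurable_id).indepFun huv
  rw [(indepFun_iff_map_prod_eq_prod_map_map (measurable_pi_apply u).aemeasurable
    (measurable_pi_apply v).aemeasurable).1 hindep, (measurePreserving_eval μ u).map_eq,
    (measurePreserving_eval μ v).map_eq]

theorem MeasureTheory.exists_card_filter_le_sum_measureReal {Ω ι : Type*} [MeasurableSpace Ω]
    {P : Measure Ω} [IsProbabilityMeasure P] {Q : Ω → Prop} (hQ : ∀ᵐ ω ∂P, Q ω) (s : Finset ι)
    {A : ι → Set Ω} (hA : ∀ j ∈ s, MeasurableSet (A j)) :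
    ∃ ω, Q ω ∧ ((s.filter fun j => ω ∈ A j).card : ℝ) ≤ ∑ j ∈ s, P.real (A j) := by
  have hcard : ∀ ω, ((s.filter fun j => ω ∈ A j).card : ℝ) = ∑ j ∈ s, (A j).indicator 1 ω := by
    intro ω
    rw [Finset.card_filter, Nat.cast_sum]
    exact Finset.sum_congr rfl fun j _ => by by_cases h : ω ∈ A j <;> simp [h]
  have hint : ∀ j ∈ s, Integrable ((A j).indicator (1 : Ω → ℝ)) P :=
    fun j hj => (integrable_const (1 : ℝ)).indicator (hA j hj)
  obtain ⟨ω, hω, hle⟩ := exists_notMem_null_le_integral (N := {ω | ¬Q ω})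
    (integrable_finsetSum s hint) (ae_iff.1 hQ)
  refine ⟨ω, not_not.1 hω, (hcard ω).trans_le (hle.trans_eq ?_)⟩
  rw [integral_finsetSum s hint]
  exact Finset.sum_congr rfl fun j hj => integral_indicator_one (hA j hj)

theorem MeasureTheory.exists_card_offDiag_filter_le {α β : Type*} [MeasurableSpace β]
    [Nonempty β] (X : Finset α) (ρ : α → Measure β) [∀ x, IsProbabilityMeasure (ρ x)]
    {Q : α → β → Prop} (hQ : ∀ x, ∀ᵐ b ∂ρ x, Q x b) {S : α → α → Set (β × β)}
    (hS : ∀ x y, MeasurableSet (S x y)) {ε : ℝ}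
    (hε : ∀ x ∈ X, ∀ y ∈ X, x ≠ y → ((ρ x).prod (ρ y)).real (S x y) ≤ ε) :
    ∃ g : α → β, (∀ x ∈ X, Q x (g x)) ∧
      ((X.offDiag.filter fun p => (g p.1, g p.2) ∈ S p.1 p.2).card : ℝ) ≤ ε * X.offDiag.card := by
  let P := Measure.pi fun u : X => ρ u
  let g := fun (ω : X → β) x => if hx : x ∈ X then ω ⟨x, hx⟩ else Classical.arbitrary β
  let A := fun p : α × α => {ω | (g ω p.1, g ω p.2) ∈ S p.1 p.2}
  have hA : ∀ p ∈ X.offDiag, MeasurableSet (A p) ∧ P.real (A p) ≤ ε := by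
    intro p hp
    obtain ⟨h₁, h₂, hne⟩ := Finset.mem_offDiag.1 hp
    have hpre : A p = (fun ω => (ω ⟨p.1, h₁⟩, ω ⟨p.2, h₂⟩)) ⁻¹' S p.1 p.2 := by
      ext
      simp [A, g, h₁, h₂]
    rw [hpre, ← map_measureReal_apply (by fun_prop) (hS _ _),
      Measure.map_pi_eval_prod_eval _ fun h => hne (congrArg Subtype.val h)]
    exact ⟨measurableSet_preimage (by fun_prop) (hS _ _), hε _ h₁ _ h₂ hne⟩
  obtain ⟨ω, hQω, hcount⟩ := exists_card_filter_le_sum_measureReal (P := P) (A := A)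
    (Measure.ae_pi_le_pi <| Filter.eventually_pi fun u : X => hQ u) X.offDiag
    fun p hp => (hA p hp).1
  refine ⟨g ω, fun x hx => by simpa [g, hx] using hQω ⟨x, hx⟩, hcount.trans ?_⟩
  rw [← nsmul_eq_mul', ← Finset.sum_const]
  exact Finset.sum_le_sum fun p hp => (hA p hp).2

theorem EuclideanSpace.norm_le_sqrt_card_mul {ι : Type*} [Fintype ι] {x : EuclideanSpace ℝ ι}
    {δ : ℝ} (hδ : 0 ≤ δ) (hx : ∀ i, |x i| ≤ δ) : ‖x‖ ≤ √(Fintype.card ι) * δ := by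
  rw [EuclideanSpace.norm_eq, ← Real.sqrt_sq hδ, ← Real.sqrt_mul (Nat.cast_nonneg _)]
  gcongr
  calc ∑ i, ‖x i‖ ^ 2 ≤ ∑ _i : ι, δ ^ 2 := by
        gcongr with i
        exact (Real.norm_eq_abs _).trans_le (hx i)
    _ = _ := by simp

theorem mem_Icc_mul_floor_div {δ : ℝ} (hδ : 0 < δ) (t : ℝ) :
    t ∈ Set.Icc (δ * ⌊t / δ⌋) (δ * ⌊t / δ⌋ + δ) := by
  have h₁ := Int.floor_le (t / δ)
  have h₂ := Int.lt_floor_add_one (t / δ)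
  rw [le_div_iff₀ hδ] at h₁
  rw [div_lt_iff₀ hδ] at h₂
  constructor <;> linarith

noncomputable def randomizedRounding (δ t : ℝ) : Measure ℝ :=
  ENNReal.ofReal (1 - Int.fract (t / δ)) • Measure.dirac (δ * ⌊t / δ⌋) +
    ENNReal.ofReal (Int.fract (t / δ)) • Measure.dirac (δ * ⌊t / δ⌋ + δ)

namespace randomizedRounding

variable {δ : ℝ}

instance (δ t : ℝ) : IsProbabilityMeasure (randomizedRounding δ t) := by
  constructor
  have h₁ := (Int.fract_lt_one (t / δ)).le
  simp only [randomizedRounding, Measure.coe_add, Measure.coe_smul, Pi.add_apply, Pi.smul_apply,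
    measure_univ, smul_eq_mul, mul_one]
  rw [← ENNReal.ofReal_add (by linarith) (Int.fract_nonneg _)]
  simp

theorem ae_eq_or_eq (δ t : ℝ) :
    ∀ᵐ s ∂randomizedRounding δ t, s = δ * ⌊t / δ⌋ ∨ s = δ * ⌊t / δ⌋ + δ := by
  simp only [randomizedRounding, ae_add_measure_iff]
  constructor <;> exact Measure.ae_smul_measure (by simp [ae_dirac_eq]) _

theorem integral_id (hδ : δ ≠ 0) (t : ℝ) : ∫ s, s ∂randomizedRounding δ t = t := by
  have h₁ := (Int.fract_lt_one (t / δ)).le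
  rw [randomizedRounding, integral_add_measure, integral_smul_measure, integral_smul_measure,
    integral_dirac, integral_dirac, ENNReal.toReal_ofReal (by linarith),
    ENNReal.toReal_ofReal (Int.fract_nonneg _)]
  · rw [Int.fract]
    linear_combination mul_div_cancel₀ t hδ
  all_goals exact (integrable_dirac (by finiteness)).smul_measure ENNReal.ofReal_ne_top

theorem ae_mem_Icc (hδ : 0 ≤ δ) (t : ℝ) :
    ∀ᵐ s ∂randomizedRounding δ t, s ∈ Set.Icc (δ * ⌊t / δ⌋) (δ * ⌊t / δ⌋ + δ) :=
  (ae_eq_or_eq δ t).mono fun s hs => by rcases hs with rfl | rfl <;> constructor <;> linarith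

theorem ae_eq_int_mul_and_abs_sub_le (hδ : 0 < δ) (t : ℝ) :
    ∀ᵐ s ∂randomizedRounding δ t, (∃ m : ℤ, s = m * δ) ∧ |s - t| ≤ δ := by
  filter_upwards [ae_eq_or_eq δ t, ae_mem_Icc hδ.le t] with s hs hsI
  have ht := mem_Icc_mul_floor_div hδ t
  refine ⟨?_, abs_sub_le_iff.2 ⟨by linarith [hsI.2, ht.1], by linarith [hsI.1, ht.2]⟩⟩
  rcases hs with rfl | rfl
  · exact ⟨⌊t / δ⌋, mul_comm _ _⟩
  · exact ⟨⌊t / δ⌋ + 1, by push_cast; ring⟩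

end randomizedRounding

section vector

variable {ι : Type*} [Fintype ι] {δ : ℝ}

noncomputable def randomizedRoundingVec (δ : ℝ) (x : EuclideanSpace ℝ ι) :
    Measure (EuclideanSpace ℝ ι) :=
  (Measure.pi fun i => randomizedRounding δ (x i)).map (MeasurableEquiv.toLp 2 (ι → ℝ))

namespace randomizedRoundingVec

instance (δ : ℝ) (x : EuclideanSpace ℝ ι) : IsProbabilityMeasure (randomizedRoundingVec δ x) :=
  Measure.isProbabilityMeasure_map (MeasurableEquiv.toLp 2 (ι → ℝ)).measurable.aemeasurable

theorem ae_eq_int_mul_and_abs_sub_le (hδ : 0 < δ) (x : EuclideanSpace ℝ ι) :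
    ∀ᵐ a ∂randomizedRoundingVec δ x, ∀ i, (∃ m : ℤ, a i = m * δ) ∧ |a i - x i| ≤ δ := by
  rw [randomizedRoundingVec, (MeasurableEquiv.toLp 2 (ι → ℝ)).measurableEmbedding.ae_map_iff]
  exact Measure.ae_pi_le_pi <| Filter.eventually_pi fun i =>
    randomizedRounding.ae_eq_int_mul_and_abs_sub_le hδ (x i)

theorem ae_norm_sub_le (hδ : 0 < δ) (x : EuclideanSpace ℝ ι) :
    ∀ᵐ a ∂randomizedRoundingVec δ x, ‖a - x‖ ≤ √(Fintype.card ι) * δ :=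
  (ae_eq_int_mul_and_abs_sub_le hδ x).mono fun _ ha =>
    EuclideanSpace.norm_le_sqrt_card_mul hδ.le fun i => (ha i).2

theorem measureReal_lt_abs_inner_sub_le (hδ : 0 < δ) (x c : EuclideanSpace ℝ ι) {s C : ℝ}
    (hs : 0 ≤ s) (hC : ‖c‖ ^ 2 ≤ C) :
    (randomizedRoundingVec δ x).real {a | s < |inner ℝ c (a - x)|}
      ≤ 2 * exp (-2 * s ^ 2 / (δ ^ 2 * C)) := by
  rw [randomizedRoundingVec, measureReal_def, MeasurableEquiv.map_apply, ← measureReal_def]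
  convert measureReal_lt_abs_pi_sum_mul_sub_integral_le
    (fun i => randomizedRounding.ae_mem_Icc hδ.le (x i)) (fun i => c i) hs
    (by simpa [EuclideanSpace.norm_sq_eq] using hC) using 4 with ω
  simp [PiLp.inner_apply, randomizedRounding.integral_id hδ.ne', mul_comm]

theorem measureReal_prod_lt_abs_inner_sub_inner_le {r η : ℝ} (hδ : 0 < δ) (hr : 0 < r)
    (hδr : δ * √(Fintype.card ι) ≤ r) (hη : 0 ≤ η) {x y : EuclideanSpace ℝ ι} (hx : ‖x‖ ≤ r)
    (hy : ‖y‖ ≤ r) :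
    ((randomizedRoundingVec δ x).prod (randomizedRoundingVec δ y)).real
      {p | 3 * √2 * η * δ * r < |inner ℝ p.1 p.2 - inner ℝ x y|} ≤ 4 * exp (-η ^ 2) := by
  have hexp : ∀ {s C : ℝ}, 0 < C → s ^ 2 = 2 * C * η ^ 2 * δ ^ 2 →
      2 * exp (-2 * s ^ 2 / (δ ^ 2 * C)) ≤ 2 * exp (-η ^ 2) := fun {s C} hC hs => by
    rw [hs, show -2 * (2 * C * η ^ 2 * δ ^ 2) / (δ ^ 2 * C) = -4 * η ^ 2 by field_simp; ring]
    gcongr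
    nlinarith [sq_nonneg η]
  have hsplit : {p : EuclideanSpace ℝ ι × EuclideanSpace ℝ ι |
      3 * √2 * η * δ * r < |inner ℝ p.1 p.2 - inner ℝ x y|} ⊆
      {p | 2 * √2 * η * δ * r < |inner ℝ p.2 (p.1 - x)|} ∪
        {p | √2 * η * δ * r < |inner ℝ x (p.2 - y)|} := by
    intro p hp
    by_contra! h
    simp only [Set.mem_union, Set.mem_ofPred_eq, not_or, not_lt] at h hp
    have hdecomp : inner ℝ p.1 p.2 - inner ℝ x y =
        inner ℝ p.2 (p.1 - x) + inner ℝ x (p.2 - y) := by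
      rw [inner_sub_right, inner_sub_right, real_inner_comm p.1, real_inner_comm x p.2]
      ring
    rw [hdecomp] at hp
    linarith [abs_add_le (inner ℝ p.2 (p.1 - x)) (inner ℝ x (p.2 - y))]
  have h₁ : ((randomizedRoundingVec δ x).prod (randomizedRoundingVec δ y)).real
      {p | 2 * √2 * η * δ * r < |inner ℝ p.2 (p.1 - x)|} ≤ 2 * exp (-η ^ 2) := by
    refine Measure.measureReal_prod_le_of_ae_slice_le
      (measurableSet_lt measurable_const (by fun_prop)) (by positivity) ?_
    filter_upwards [ae_norm_sub_le hδ y] with b hb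
    have hb2 : ‖b‖ ≤ 2 * r := by
      linarith [norm_le_norm_sub_add b y, mul_comm δ √(Fintype.card ι)]
    exact (measureReal_lt_abs_inner_sub_le hδ x b (by positivity)
      (pow_le_pow_left₀ (norm_nonneg b) hb2 2)).trans (hexp (by positivity)
        (by linear_combination (4 * η ^ 2 * δ ^ 2 * r ^ 2) * Real.sq_sqrt zero_le_two))
  have h₂ : ((randomizedRoundingVec δ x).prod (randomizedRoundingVec δ y)).real
      {p | √2 * η * δ * r < |inner ℝ x (p.2 - y)|} ≤ 2 * exp (-η ^ 2) := by
    have hprod : {p : EuclideanSpace ℝ ι × EuclideanSpace ℝ ι |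
        √2 * η * δ * r < |inner ℝ x (p.2 - y)|} =
        Set.univ ×ˢ {b | √2 * η * δ * r < |inner ℝ x (b - y)|} := by
      ext; simp
    rw [hprod, measureReal_prod_prod, probReal_univ, one_mul]
    exact (measureReal_lt_abs_inner_sub_le hδ y x (by positivity)
      (pow_le_pow_left₀ (norm_nonneg x) hx 2)).trans (hexp (by positivity)
        (by linear_combination (η ^ 2 * δ ^ 2 * r ^ 2) * Real.sq_sqrt zero_le_two))
  calc _ ≤ _ := measureReal_mono hsplit
    _ ≤ _ := measureReal_union_le _ _
    _ ≤ 4 * exp (-η ^ 2) := by linarith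

end randomizedRoundingVec

end vector

theorem grid_rounding_tail_bound_general {k : ℕ}
    {r δ η : ℝ} (hr : 0 < r) (hδ : 0 < δ) (hδk : δ * Real.sqrt k ≤ r) (hη : 1 ≤ η)
    (X : Finset (EuclideanSpace ℝ (Fin k)))
    (hXr : ∀ x ∈ X, ‖x‖ ≤ r) :
    ∃ g : EuclideanSpace ℝ (Fin k) → EuclideanSpace ℝ (Fin k),
      (∀ x ∈ X, ∀ i : Fin k, (∃ m : ℤ, g x i = (m : ℝ) * δ) ∧ |g x i - x i| ≤ δ) ∧
      ((X.offDiag.filter fun p =>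
          3 * Real.sqrt 2 * η * δ * r <
            |(inner ℝ (g p.1) (g p.2) : ℝ) - (inner ℝ p.1 p.2 : ℝ)|).card : ℝ)
        ≤ 4 * Real.exp (-η ^ 2) * ((X.card : ℝ) * ((X.card : ℝ) - 1)) := by
  obtain ⟨g, hgrid, hcount⟩ := exists_card_offDiag_filter_le X (randomizedRoundingVec δ)
    (fun x => randomizedRoundingVec.ae_eq_int_mul_and_abs_sub_le hδ x)
    (S := fun x y => {q | 3 * √2 * η * δ * r < |inner ℝ q.1 q.2 - inner ℝ x y|})
    (fun _ _ => measurableSet_lt measurable_const (by fun_prop))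
    fun x hx y hy _ => randomizedRoundingVec.measureReal_prod_lt_abs_inner_sub_inner_le hδ hr
      (by simpa using hδk) (by linarith) (hXr x hx) (hXr y hy)
  refine ⟨g, hgrid, hcount.trans_eq ?_⟩
  rw [Finset.offDiag_card, Nat.cast_sub (Nat.le_mul_self _)]
  push_cast
  ring

/-- Lemma 4 of the paper: rounding to a `δ`-grid such that at most a
`4e^{−η²}` fraction of pairs have inner-product error exceeding `3√2·η·δ·r`. -/
theorem grid_rounding_tail_bound {k : ℕ} (hk : 1 ≤ k)
    {r δ η : ℝ} (hr : 0 < r) (hδ : 0 < δ) (hδk : δ * Real.sqrt k ≤ r) (hη : 1 ≤ η)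
    (X : Finset (EuclideanSpace ℝ (Fin k))) (hX : 2 ≤ X.card)
    (hXr : ∀ x ∈ X, ‖x‖ ≤ r) :
    ∃ g : EuclideanSpace ℝ (Fin k) → EuclideanSpace ℝ (Fin k),
      (∀ x ∈ X, ∀ i : Fin k, (∃ m : ℤ, g x i = (m : ℝ) * δ) ∧ |g x i - x i| ≤ δ) ∧
      ((X.offDiag.filter fun p =>
          3 * Real.sqrt 2 * η * δ * r <
            |(inner ℝ (g p.1) (g p.2) : ℝ) - (inner ℝ p.1 p.2 : ℝ)|).card : ℝ)
        ≤ 4 * Real.exp (-η ^ 2) * ((X.card : ℝ) * ((X.card : ℝ) - 1)) :=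
  grid_rounding_tail_bound_general hr hδ hδk hη X hXr
end

section
/- Let (X,d_X) be a finite metric space with |X| = n̂ > 1, let (Y,d_Y) be a metric space, let q ≥ 1 and α > 0, and assume that every injective map f : X → Y satisfies Energy_q(f) ≥ α. Then for every integer n ≥ n̂ there exists a finite metric space Z with n ≤ |Z| ≤ 2n such that every injective map F : Z → Y satisfies Energy_q(F) ≥ α/2. Moreover, if X is isometric to a subset of a Euclidean space, then for every δ > 0 the space Z admits an injective map into some finite-dimensional Euclidean space with worst-case distortion at most 1 + δ. -/
open scoped BigOperators
open scoped Classical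

/-!
Take `Z = X × Fin k` with `k = n / |X| + 1`, so that `n ≤ |Z| ≤ 2n`, and
`d_Z(z, z') = √(d_X(x, x')² + 2a²)` for `z ≠ z'`: the point `z = (x, i)` is sent to
`(x, a • e_z)` in the `ℓ²`-product of `X` with a Euclidean space, so `Z` is Euclidean as soon as
`X` is. Given an injective `F : Z → Y`, every section `s : X → Fin k` gives an injective map
`x ↦ F (x, s x)` on `X`; averaging the Energy bound for `X` over all sections bounds the `q`-th
moment of `|expans - 1|`, measured with `d_X`, over the pairs of `Z` with distinct
`X`-coordinates. These are more than half of all pairs of `Z`, and for `a` small compared with the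
minimal distance of `X` their `d_Z` is within a factor `1 + ε` of `d_X`, which by Minkowski's
inequality moves the `ℓ_q` average by `O(ε)` only.
-/

open Finset Function Fintype

section Thicken

variable {X W : Type*} [DecidableEq W]

noncomputable def thicken (π : W → X) (a : ℝ) (w : W) : WithLp 2 (X × EuclideanSpace ℝ W) :=
  WithLp.toLp 2 (π w, EuclideanSpace.single w a)

theorem thicken_injective (π : W → X) {a : ℝ} (ha : a ≠ 0) : Injective (thicken π a) := by
  intro w w' h
  have h' := congrArg (fun z => z.snd w) h
  by_contra hne
  simp [thicken, hne, ha] at h'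

variable [MetricSpace X] [Fintype W]

theorem dist_thicken (π : W → X) (a : ℝ) (w w' : W) :
    dist (thicken π a w) (thicken π a w') =
      √(dist (π w) (π w') ^ 2 +
        dist (EuclideanSpace.single w a) (EuclideanSpace.single w' a) ^ 2) := by
  rw [WithLp.prod_dist_eq_add (by norm_num), Real.sqrt_eq_rpow]
  simp [thicken]

theorem dist_le_dist_thicken (π : W → X) (a : ℝ) (w w' : W) :
    dist (π w) (π w') ≤ dist (thicken π a w) (thicken π a w') := by
  rw [dist_thicken]
  exact Real.le_sqrt_of_sq_le (le_add_of_nonneg_right (sq_nonneg _))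

theorem dist_thicken_le (π : W → X) (a : ℝ) (w w' : W) :
    dist (thicken π a w) (thicken π a w') ≤ dist (π w) (π w') + 2 * |a| := by
  have hsingle : dist (EuclideanSpace.single w a) (EuclideanSpace.single w' a) ≤ 2 * |a| := by
    refine (dist_le_norm_add_norm _ _).trans_eq ?_
    rw [PiLp.norm_single, PiLp.norm_single, Real.norm_eq_abs, two_mul]
  rw [dist_thicken]
  refine Real.sqrt_le_iff.mpr ⟨by positivity, ?_⟩
  nlinarith [dist_nonneg (x := π w) (y := π w'),
    dist_nonneg (x := EuclideanSpace.single w a) (y := EuclideanSpace.single w' a)]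

theorem dist_thicken_le_mul (π : W → X) {ε r : ℝ} (hε : 0 ≤ ε) (hr : 0 ≤ r) {w w' : W}
    (hrw : r ≤ dist (π w) (π w')) :
    dist (thicken π (ε * r / 2) w) (thicken π (ε * r / 2) w') ≤ (1 + ε) * dist (π w) (π w') := by
  refine (dist_thicken_le π _ w w').trans ?_
  rw [abs_of_nonneg (by positivity)]
  nlinarith

theorem le_dist_thicken_and_dist_thicken_le_mul {ι : Type*} {σ : X × ι → W} {π : W → X}
    (hπ : ∀ x i, π (σ (x, i)) = x) {ε r : ℝ} (hε : 0 ≤ ε) (hr : 0 ≤ r) {x y : X}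
    (hxy : r ≤ dist x y) (i j : ι) :
    dist x y ≤ dist (thicken π (ε * r / 2) (σ (x, i))) (thicken π (ε * r / 2) (σ (y, j))) ∧
      dist (thicken π (ε * r / 2) (σ (x, i))) (thicken π (ε * r / 2) (σ (y, j))) ≤
        (1 + ε) * dist x y := by
  have hlo := dist_le_dist_thicken π (ε * r / 2) (σ (x, i)) (σ (y, j))
  have hhi := dist_thicken_le_mul π hε hr (w := σ (x, i)) (w' := σ (y, j)) (by rwa [hπ, hπ])
  rw [hπ, hπ] at hlo hhi
  exact ⟨hlo, hhi⟩

theorem dist_thicken_comp_isometry {E : Type*} [MetricSpace E] {φ : X → E} (hφ : Isometry φ)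
    (π : W → X) (a : ℝ) (w w' : W) :
    dist (thicken (φ ∘ π) a w) (thicken (φ ∘ π) a w') =
      dist (thicken π a w) (thicken π a w') := by
  rw [dist_thicken, dist_thicken, comp_apply, comp_apply, hφ.dist_eq]

end Thicken

theorem exists_isometry_euclideanSpace {Z E : Type*} [PseudoMetricSpace Z]
    [NormedAddCommGroup E] [InnerProductSpace ℝ E] [FiniteDimensional ℝ E] {f : Z → E}
    (hf : Isometry f) : ∃ (m : ℕ) (g : Z → EuclideanSpace ℝ (Fin m)), Isometry g :=
  ⟨_, (stdOrthonormalBasis ℝ E).repr ∘ f, (stdOrthonormalBasis ℝ E).repr.isometry.comp hf⟩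

theorem exists_pos_forall_le_dist (X : Type*) [MetricSpace X] [Finite X] [Nonempty X] :
    ∃ δ > 0, ∀ x y : X, x ≠ y → δ ≤ dist x y := by
  obtain ⟨p₀, hp₀⟩ := Finite.exists_min fun p : X × X => if p.1 = p.2 then 1 else dist p.1 p.2
  refine ⟨_, ?_, fun x y hxy => (hp₀ (x, y)).trans_eq (if_neg hxy)⟩
  split_ifs with h
  exacts [one_pos, dist_pos.mpr h]

theorem sum_fun_apply_apply {α ι M : Type*} [Fintype α] [Fintype ι] [AddCommMonoid M]
    {x y : α} (hxy : x ≠ y) (g : ι → ι → M) :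
    ∑ s : α → ι, g (s x) (s y) = card ι ^ (card α - 2) • ∑ i, ∑ j, g i j := by
  have hcard : card {z // z ≠ x} = card α - 1 := by simp
  rw [← (Equiv.funSplitAt x ι).symm.sum_comp, Fintype.sum_prod_type, smul_sum]
  refine sum_congr rfl fun i _ => ?_
  have := Fintype.sum_piFinset_apply (g i) (univ : Finset ι) (⟨y, hxy.symm⟩ : {z // z ≠ x})
  simp only [Fintype.piFinset_univ, card_univ, hcard] at this
  simpa [Equiv.funSplitAt, Equiv.piSplitAt, hxy.symm, Nat.sub_sub] using this

theorem card_sq_mul_le_sum_of_forall_selection {α ι : Type*} [Fintype α] [Fintype ι]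
    [Nonempty ι] (hα : 2 ≤ card α) {L : ℝ} (G : α → α → ι → ι → ℝ)
    (h : ∀ s : α → ι, L ≤ ∑ p ∈ univ.offDiag, G p.1 p.2 (s p.1) (s p.2)) :
    (card ι : ℝ) ^ 2 * L ≤ ∑ p ∈ univ.offDiag, ∑ i, ∑ j, G p.1 p.2 i j := by
  have hk : (0 : ℝ) < card ι ^ (card α - 2) := by positivity
  have hsum : ∑ s : α → ι, ∑ p ∈ univ.offDiag, G p.1 p.2 (s p.1) (s p.2) =
      card ι ^ (card α - 2) * ∑ p ∈ univ.offDiag, ∑ i, ∑ j, G p.1 p.2 i j := by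
    rw [sum_comm, mul_sum]
    refine sum_congr rfl fun p hp => ?_
    rw [sum_fun_apply_apply (mem_offDiag.mp hp).2.2, nsmul_eq_mul, Nat.cast_pow]
  have hcount : ∑ _s : α → ι, L = card ι ^ (card α - 2) * (card ι ^ 2 * L) := by
    rw [sum_const, card_univ, card_fun, nsmul_eq_mul, ← mul_assoc, Nat.cast_pow, ← pow_add,
      Nat.sub_add_cancel hα]
  rw [← mul_le_mul_iff_right₀ hk, ← hcount, ← hsum]
  exact sum_le_sum fun s _ => h s

theorem sum_offDiag_sum_sum_le_sum_offDiag {X ι W : Type*} [Fintype X] [Fintype ι] [Fintype W]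
    {σ : X × ι → W} (hσ : Injective σ) {h : W → W → ℝ} (hh : ∀ w w', 0 ≤ h w w') :
    ∑ p ∈ univ.offDiag, ∑ i, ∑ j, h (σ (p.1, i)) (σ (p.2, j)) ≤
      ∑ w ∈ univ.offDiag, h w.1 w.2 := by
  let e : (X × X) × (ι × ι) ↪ W × W :=
    ⟨fun p => (σ (p.1.1, p.2.1), σ (p.1.2, p.2.2)), fun p p' hp => by
      simp only [Prod.mk.injEq] at hp
      have h₁ := Prod.ext_iff.mp (hσ hp.1)
      have h₂ := Prod.ext_iff.mp (hσ hp.2)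
      ext <;> simp_all⟩
  calc _ = ∑ w ∈ (univ.offDiag ×ˢ univ).map e, h w.1 w.2 := by
        rw [sum_map, sum_product]
        simp_rw [Fintype.sum_prod_type]
        rfl
    _ ≤ _ := by
      refine sum_le_sum_of_subset_of_nonneg (fun w hw => ?_) fun w _ _ => hh w.1 w.2
      obtain ⟨p, hp, rfl⟩ := mem_map.mp hw
      have hxy := (mem_offDiag.mp (mem_product.mp hp).1).2.2
      simp only [mem_offDiag, mem_univ, true_and]
      exact fun h => hxy (congrArg Prod.fst (hσ h))

theorem natCast_mul_sub_one_nonneg (n : ℕ) : (0 : ℝ) ≤ n * (n - 1) := by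
  rcases Nat.eq_zero_or_pos n with rfl | h
  · simp
  · exact mul_nonneg (Nat.cast_nonneg _) (sub_nonneg.mpr (by exact_mod_cast h))

theorem energy_eq_div {α β : Type*} [PseudoMetricSpace α] [PseudoMetricSpace β]
    (s : Finset α) (f : α → β) {q : ℝ} :
    energy s f q = (∑ p ∈ s.offDiag, |expans f p.1 p.2 - 1| ^ q) ^ (1 / q) /
      ((#s : ℝ) * (#s - 1)) ^ (1 / q) :=
  Real.div_rpow (Finset.sum_nonneg fun _ _ => by positivity) (natCast_mul_sub_one_nonneg _) _

theorem rpow_mul_le_energy {α β : Type*} [PseudoMetricSpace α] [PseudoMetricSpace β]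
    {s : Finset α} (f : α → β) {q M c : ℝ} (hM : 0 ≤ M)
    (h : M ^ (1 / q) * c ≤ (∑ p ∈ s.offDiag, |expans f p.1 p.2 - 1| ^ q) ^ (1 / q)) :
    (M / (#s * (#s - 1))) ^ (1 / q) * c ≤ energy s f q := by
  rw [energy_eq_div, Real.div_rpow hM (natCast_mul_sub_one_nonneg _), div_mul_eq_mul_div]
  exact div_le_div_of_nonneg_right h (Real.rpow_nonneg (natCast_mul_sub_one_nonneg _) _)

theorem le_energy_iff {α β : Type*} [PseudoMetricSpace α] [PseudoMetricSpace β]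
    {s : Finset α} (hs : 1 < #s) (f : α → β) {q a : ℝ} (hq : 0 < q) (ha : 0 ≤ a) :
    a ≤ energy s f q ↔
      a ^ q * (#s * (#s - 1)) ≤ ∑ p ∈ s.offDiag, |expans f p.1 p.2 - 1| ^ q := by
  have hden : (0 : ℝ) < #s * (#s - 1) := by
    have : (1 : ℝ) < #s := by exact_mod_cast hs
    nlinarith
  rw [energy, one_div, Real.le_rpow_inv_iff_of_pos ha (by positivity) hq, le_div_iff₀ hden]

theorem le_sum_offDiag_sum_sum_of_le_energy {X Y ι : Type*} [MetricSpace X] [Fintype X]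
    [MetricSpace Y] [Fintype ι] [Nonempty ι] (hX : 2 ≤ card X) {q α : ℝ} (hq : 0 < q)
    (hα : 0 ≤ α) (hlb : ∀ f : X → Y, Injective f → α ≤ energy univ f q)
    {F : X × ι → Y} (hF : Injective F) :
    (card ι : ℝ) ^ 2 * (card X * (card X - 1)) * α ^ q ≤
      ∑ p ∈ univ.offDiag, ∑ i, ∑ j, |dist (F (p.1, i)) (F (p.2, j)) / dist p.1 p.2 - 1| ^ q := by
  have hsel := card_sq_mul_le_sum_of_forall_selection hX
    (fun x y i j => |dist (F (x, i)) (F (y, j)) / dist x y - 1| ^ q)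
    (L := α ^ q * (card X * (card X - 1))) fun s => by
      have hf := hlb (fun x => F (x, s x)) fun x y h => congrArg Prod.fst (hF h)
      rwa [le_energy_iff (by rwa [card_univ]) _ hq hα, card_univ] at hf
  linarith

theorem abs_div_sub_one_le {D d d' ε : ℝ} (hd : 0 < d) (hdd' : d ≤ d')
    (hd'd : d' ≤ (1 + ε) * d) :
    |D / d - 1| ≤ (1 + ε) * |D / d' - 1| + ε := by
  have hd' : 0 < d' := hd.trans_le hdd'
  have hr : 1 ≤ d' / d := (one_le_div hd).mpr hdd'
  have hr' : d' / d ≤ 1 + ε := (div_le_iff₀ hd).mpr hd'd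
  have hsplit : D / d - 1 = d' / d * (D / d' - 1) + (d' / d - 1) := by field_simp; ring
  calc |D / d - 1| ≤ d' / d * |D / d' - 1| + (d' / d - 1) := by
        rw [hsplit]
        refine (abs_add_le _ _).trans_eq ?_
        rw [abs_mul, abs_of_pos (show 0 < d' / d by positivity),
          abs_of_nonneg (show 0 ≤ d' / d - 1 by linarith)]
    _ ≤ (1 + ε) * |D / d' - 1| + ε := by gcongr; linarith

theorem Lp_le_mul_Lp_add_of_le {ι : Type*} (s : Finset ι) {a b : ι → ℝ} {p l m : ℝ}
    (hp : 1 ≤ p) (ha : ∀ i ∈ s, 0 ≤ a i) (hb : ∀ i ∈ s, 0 ≤ b i) (hl : 0 ≤ l) (hm : 0 ≤ m)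
    (hab : ∀ i ∈ s, a i ≤ l * b i + m) :
    (∑ i ∈ s, a i ^ p) ^ (1 / p) ≤
      l * (∑ i ∈ s, b i ^ p) ^ (1 / p) + (#s : ℝ) ^ (1 / p) * m := by
  have hp0 : 0 < p := zero_lt_one.trans_le hp
  have hmono : ∑ i ∈ s, a i ^ p ≤ ∑ i ∈ s, (l * b i + m) ^ p :=
    sum_le_sum fun i hi => Real.rpow_le_rpow (ha i hi) (hab i hi) hp0.le
  have hscale : (∑ i ∈ s, (l * b i) ^ p) ^ (1 / p) = l * (∑ i ∈ s, b i ^ p) ^ (1 / p) := by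
    rw [sum_congr rfl fun i hi => Real.mul_rpow hl (hb i hi), ← mul_sum,
      Real.mul_rpow (by positivity) (sum_nonneg fun i hi => by have := hb i hi; positivity),
      ← Real.rpow_mul hl, mul_one_div_cancel hp0.ne', Real.rpow_one]
  have hconst : (∑ _i ∈ s, m ^ p) ^ (1 / p) = (#s : ℝ) ^ (1 / p) * m := by
    rw [sum_const, nsmul_eq_mul, Real.mul_rpow (by positivity) (by positivity),
      ← Real.rpow_mul hm, mul_one_div_cancel hp0.ne', Real.rpow_one]
  calc (∑ i ∈ s, a i ^ p) ^ (1 / p) ≤ (∑ i ∈ s, (l * b i + m) ^ p) ^ (1 / p) :=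
        Real.rpow_le_rpow (sum_nonneg fun i hi => by have := ha i hi; positivity) hmono
          (by positivity)
    _ ≤ (∑ i ∈ s, (l * b i) ^ p) ^ (1 / p) + (∑ _i ∈ s, m ^ p) ^ (1 / p) :=
        Real.Lp_add_le_of_nonneg s hp (fun i hi => mul_nonneg hl (hb i hi)) fun _ _ => hm
    _ = _ := by rw [hscale, hconst]

theorem le_energy_of_dist_le_mul {X Y W ι : Type*} [MetricSpace X] [Fintype X] [MetricSpace Y]
    [MetricSpace W] [Fintype W] [Fintype ι] [Nonempty ι] (hX : 2 ≤ card X) {q α ε : ℝ}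
    (hq : 1 ≤ q) (hα : 0 ≤ α) (hε : 0 ≤ ε)
    (hlb : ∀ f : X → Y, Injective f → α ≤ energy univ f q) (σ : X × ι ≃ W)
    (hσ : ∀ x y, x ≠ y → ∀ i j, dist x y ≤ dist (σ (x, i)) (σ (y, j)) ∧
      dist (σ (x, i)) (σ (y, j)) ≤ (1 + ε) * dist x y)
    {F : W → Y} (hF : Injective F) :
    ((card ι ^ 2 * (card X * (card X - 1)) : ℝ) / (card W * (card W - 1))) ^ (1 / q) *
      ((α - ε) / (1 + ε)) ≤ energy univ F q := by
  have hq0 : 0 < q := zero_lt_one.trans_le hq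
  set I := (univ : Finset X).offDiag ×ˢ (univ : Finset (ι × ι))
  have hI : (#I : ℝ) = card ι ^ 2 * (card X * (card X - 1)) := by
    rw [card_product, offDiag_card, card_univ, card_univ, Fintype.card_prod, Nat.cast_mul,
      Nat.cast_sub (Nat.le_mul_self _)]
    push_cast
    ring
  have hsum_I : ∀ g : (X × X) × (ι × ι) → ℝ,
      ∑ p ∈ I, g p = ∑ p ∈ univ.offDiag, ∑ i, ∑ j, g (p, (i, j)) := fun g => by
    rw [sum_product]
    simp_rw [Fintype.sum_prod_type]
  let D : (X × X) × (ι × ι) → ℝ := fun p => dist (F (σ (p.1.1, p.2.1))) (F (σ (p.1.2, p.2.2)))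
  let a : (X × X) × (ι × ι) → ℝ := fun p => |D p / dist p.1.1 p.1.2 - 1|
  let b : (X × X) × (ι × ι) → ℝ := fun p => |D p / dist (σ (p.1.1, p.2.1)) (σ (p.1.2, p.2.2)) - 1|
  have hsections : (#I : ℝ) * α ^ q ≤ ∑ p ∈ I, a p ^ q := by
    have h := le_sum_offDiag_sum_sum_of_le_energy hX hq0 hα hlb (hF.comp σ.injective)
    rw [hI, hsum_I]
    exact h
  have hab : ∀ p ∈ I, a p ≤ (1 + ε) * b p + ε := by
    intro p hp
    have hxy := (mem_offDiag.mp (mem_product.mp hp).1).2.2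
    obtain ⟨hlo, hhi⟩ := hσ _ _ hxy p.2.1 p.2.2
    exact abs_div_sub_one_le (dist_pos.mpr hxy) hlo hhi
  have hminkowski : (#I : ℝ) ^ (1 / q) * α ≤
      (1 + ε) * (∑ p ∈ I, b p ^ q) ^ (1 / q) + (#I : ℝ) ^ (1 / q) * ε := by
    calc (#I : ℝ) ^ (1 / q) * α = ((#I : ℝ) * α ^ q) ^ (1 / q) := by
          rw [Real.mul_rpow (by positivity) (by positivity), ← Real.rpow_mul hα,
            mul_one_div_cancel hq0.ne', Real.rpow_one]
      _ ≤ (∑ p ∈ I, a p ^ q) ^ (1 / q) := by gcongr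
      _ ≤ _ := Lp_le_mul_Lp_add_of_le I hq (fun _ _ => abs_nonneg _)
          (fun _ _ => abs_nonneg _) (by linarith) hε hab
  have hsub : ∑ p ∈ I, b p ^ q ≤ ∑ w ∈ (univ : Finset W).offDiag, |expans F w.1 w.2 - 1| ^ q := by
    rw [hsum_I]
    exact sum_offDiag_sum_sum_le_sum_offDiag (h := fun w w' => |expans F w w' - 1| ^ q)
      σ.injective fun _ _ => by positivity
  rw [← hI, ← card_univ (α := W)]
  refine rpow_mul_le_energy F (Nat.cast_nonneg _) ?_
  rw [mul_div_assoc', div_le_iff₀ (by linarith)]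
  calc (#I : ℝ) ^ (1 / q) * (α - ε) ≤ (∑ p ∈ I, b p ^ q) ^ (1 / q) * (1 + ε) := by linarith
    _ ≤ _ := by gcongr

theorem le_mul_div_add_one_le_two_mul {m n : ℕ} (hm : 0 < m) (hmn : m ≤ n) :
    n ≤ m * (n / m + 1) ∧ m * (n / m + 1) ≤ 2 * n := by
  have := Nat.div_add_mod n m
  have := Nat.mod_lt n hm
  rw [Nat.mul_add, Nat.mul_one]
  constructor <;> omega

theorem half_lt_div_and_div_le_one {n k : ℕ} (hn : 2 ≤ n) (hk : 1 ≤ k) :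
    1 / 2 < ((k : ℝ) ^ 2 * (n * (n - 1))) / ((n * k : ℕ) * ((n * k : ℕ) - 1)) ∧
      ((k : ℝ) ^ 2 * (n * (n - 1))) / ((n * k : ℕ) * ((n * k : ℕ) - 1)) ≤ 1 := by
  have hn' : (2 : ℝ) ≤ n := by exact_mod_cast hn
  have hk' : (1 : ℝ) ≤ k := by exact_mod_cast hk
  have hnk : (2 : ℝ) ≤ n * k := by nlinarith
  have hden : (0 : ℝ) < (n * k : ℕ) * ((n * k : ℕ) - 1) := by push_cast; nlinarith
  rw [div_le_one hden, lt_div_iff₀ hden]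
  push_cast
  constructor
  · nlinarith [mul_pos (by linarith : (0 : ℝ) < n * k) (by nlinarith : (0 : ℝ) < k * (n - 2) + 1)]
  · nlinarith [mul_nonneg (by linarith : (0 : ℝ) ≤ n * k) (by linarith : (0 : ℝ) ≤ k - 1)]

theorem exists_pos_half_le_rpow_mul {ρ q α : ℝ} (hρ : 1 / 2 < ρ) (hρ1 : ρ ≤ 1) (hq : 1 ≤ q)
    (hα : 0 < α) : ∃ ε > 0, α / 2 ≤ ρ ^ (1 / q) * ((α - ε) / (1 + ε)) := by
  have hρ0 : 0 < ρ := by linarith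
  set ε := α * (2 * ρ - 1) / (2 * ρ + α) with hε
  have hε0 : 0 < ε := by apply div_pos <;> nlinarith
  have hfrac : (α - ε) / (1 + ε) = α / (2 * ρ) := by
    rw [div_eq_div_iff (by positivity) (by positivity), hε]
    field_simp
    ring
  refine ⟨ε, hε0, ?_⟩
  calc α / 2 = ρ * (α / (2 * ρ)) := by field_simp
    _ ≤ ρ ^ (1 / q) * ((α - ε) / (1 + ε)) := by
      rw [hfrac]
      gcongr
      exact Real.self_le_rpow_of_le_one hρ0.le hρ1 (by rw [div_le_one (by linarith)]; exact hq)

/-- metric composition for `Energy_q`, Lemma of Appendix A: from a hard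
instance `X` of size `n̂` one obtains hard instances `Z` of every size in `[n, 2n]`,
which remain nearly Euclidean if `X` is Euclidean. -/
theorem metric_composition_energy {X Y : Type*} [MetricSpace X] [Fintype X]
    [MetricSpace Y] (hX : 1 < Fintype.card X)
    {q α : ℝ} (hq : 1 ≤ q) (hα : 0 < α)
    (hlb : ∀ f : X → Y, Function.Injective f →
      α ≤ energy (Finset.univ : Finset X) f q) :
    ∀ n : ℕ, Fintype.card X ≤ n →
      ∃ (Z : Type) (iZ : MetricSpace Z) (fZ : Fintype Z),
        n ≤ @Fintype.card Z fZ ∧ @Fintype.card Z fZ ≤ 2 * n ∧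
        (∀ F : Z → Y, Function.Injective F →
          α / 2 ≤ @energy Z Y iZ.toPseudoMetricSpace _ (@Finset.univ Z fZ) F q) ∧
        ((∃ (m : ℕ) (φ : X → EuclideanSpace ℝ (Fin m)), Isometry φ) →
          ∀ δ : ℝ, 0 < δ →
            ∃ (m : ℕ) (g : Z → EuclideanSpace ℝ (Fin m)) (c : ℝ),
              Function.Injective g ∧ 0 < c ∧
              ∀ u v : Z, u ≠ v →
                dist (g u) (g v) ≤ c * @dist Z iZ.toPseudoMetricSpace.toDist u v ∧
                c * @dist Z iZ.toPseudoMetricSpace.toDist u v ≤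
                  (1 + δ) * dist (g u) (g v)) := by
  intro n hn
  have : Nonempty X := Fintype.card_pos_iff.mp (by omega)
  set k := n / card X + 1
  obtain ⟨hρ, hρ1⟩ := half_lt_div_and_div_le_one (k := k) hX (Nat.le_add_left _ _)
  obtain ⟨ε, hε, hbound⟩ := exists_pos_half_le_rpow_mul hρ hρ1 hq hα
  obtain ⟨r, hr, hr_le⟩ := exists_pos_forall_le_dist X
  let σ : X × Fin k ≃ Fin (card X) × Fin k := (equivFin X).prodCongr (Equiv.refl _)
  let π : Fin (card X) × Fin k → X := fun z => (σ.symm z).1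
  let iZ : MetricSpace (Fin (card X) × Fin k) :=
    MetricSpace.induced (thicken π (ε * r / 2)) (thicken_injective π (by positivity)) inferInstance
  have hsize := le_mul_div_add_one_le_two_mul (Nat.zero_lt_of_lt hX) hn
  refine ⟨Fin (card X) × Fin k, iZ, inferInstance, by simpa using hsize.1, by simpa using hsize.2,
    fun F hF => ?_, ?_⟩
  · have hπ : ∀ x i, π (σ (x, i)) = x := fun x i => by simp [π]
    have hZ := le_energy_of_dist_le_mul hX hq hα.le hε.le hlb σ (fun x y hxy i j =>
      le_dist_thicken_and_dist_thicken_le_mul hπ hε.le hr.le (hr_le x y hxy) i j) hF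
    simp only [card_prod, Fintype.card_fin] at hZ
    exact hbound.trans hZ
  · rintro ⟨m, φ, hφ⟩ δ hδ
    obtain ⟨M, g, hg⟩ := exists_isometry_euclideanSpace (f := thicken (φ ∘ π) (ε * r / 2))
      (Isometry.of_dist_eq fun u v => dist_thicken_comp_isometry hφ π _ u v)
    refine ⟨M, g, 1, hg.injective, one_pos, fun u v _ => ?_⟩
    rw [hg.dist_eq, one_mul]
    exact ⟨le_rfl, le_mul_of_one_le_left dist_nonneg (by linarith)⟩
end

section
/- Let (X,d_X) be a finite metric space with |X| ≥ 2 and let f : X → ℝ^k be an injective map. Then there exists a constant c > 0 such that the rescaled map f' = c·f satisfies Stress₁(f') ≤ 4·Stress*₁(f). -/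
open scoped BigOperators
open scoped Classical

/-!
Rescale `f` by `c = Σ d / Σ d̂`, so that the total embedded length matches the total original
length. Writing `c d̂ - d = c (d̂ - d) + (c - 1) d` gives
`Σ |c d̂ - d| ≤ c Σ |d̂ - d| + |c - 1| Σ d`, and `|c - 1| = |Σ d - Σ d̂| / Σ d̂ ≤ Σ |d̂ - d| / Σ d̂`.
Both terms equal `Σ d · Σ |d̂ - d| / Σ d̂`, so in fact `Stress₁(c f) ≤ 2 Stress*₁(f)`.
-/

theorem abs_mul_sub_le_of_nonneg {c x y : ℝ} (hc : 0 ≤ c) (hy : 0 ≤ y) :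
    |c * x - y| ≤ c * |x - y| + |c - 1| * y := by
  calc |c * x - y| = |c * (x - y) + (c - 1) * y| := by congr 1; ring
    _ ≤ |c * (x - y)| + |(c - 1) * y| := abs_add_le _ _
    _ = c * |x - y| + |c - 1| * y := by
      rw [abs_mul, abs_mul, abs_of_nonneg hc, abs_of_nonneg hy]

namespace Finset

variable {ι : Type*} (s : Finset ι) (a b : ι → ℝ)

theorem abs_sum_sub_sum_le : |∑ i ∈ s, a i - ∑ i ∈ s, b i| ≤ ∑ i ∈ s, |a i - b i| := by
  rw [← sum_sub_distrib]
  exact abs_sum_le_sum_abs _ _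

variable {s a b}

theorem sum_abs_mul_sub_le_of_sum_pos (hb : ∀ i ∈ s, 0 ≤ b i) (ha : 0 < ∑ i ∈ s, a i) :
    ∑ i ∈ s, |(∑ j ∈ s, b j) / (∑ j ∈ s, a j) * a i - b i| ≤
      2 * (∑ j ∈ s, b j) * (∑ i ∈ s, |a i - b i|) / ∑ j ∈ s, a j := by
  set A := ∑ j ∈ s, a j
  set B := ∑ j ∈ s, b j
  set S := ∑ i ∈ s, |a i - b i|
  have hB : 0 ≤ B := sum_nonneg hb
  have hc : 0 ≤ B / A := div_nonneg hB ha.le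
  have hc_sub_one : |B / A - 1| ≤ S / A := by
    rw [show B / A - 1 = (B - A) / A by field_simp, abs_div, abs_of_pos ha, abs_sub_comm]
    gcongr
    exact abs_sum_sub_sum_le s a b
  calc ∑ i ∈ s, |B / A * a i - b i|
      ≤ ∑ i ∈ s, (B / A * |a i - b i| + |B / A - 1| * b i) :=
        sum_le_sum fun i hi => abs_mul_sub_le_of_nonneg hc (hb i hi)
    _ = B / A * S + |B / A - 1| * B := by rw [sum_add_distrib, ← mul_sum, ← mul_sum]
    _ ≤ B / A * S + S / A * B := by gcongr
    _ = 2 * B * S / A := by ring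

theorem sum_abs_mul_sub_div_sum_le_of_sum_pos (hb : ∀ i ∈ s, 0 ≤ b i)
    (ha : 0 < ∑ i ∈ s, a i) :
    (∑ i ∈ s, |(∑ j ∈ s, b j) / (∑ j ∈ s, a j) * a i - b i|) / ∑ j ∈ s, b j ≤
      2 * ((∑ i ∈ s, |a i - b i|) / ∑ j ∈ s, a j) := by
  rcases (sum_nonneg hb).eq_or_lt with hB | hB
  · rw [← hB, div_zero]
    positivity
  · rw [div_le_iff₀ hB]
    calc _ ≤ 2 * (∑ j ∈ s, b j) * (∑ i ∈ s, |a i - b i|) / ∑ j ∈ s, a j :=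
          sum_abs_mul_sub_le_of_sum_pos hb ha
      _ = _ := by ring

end Finset

theorem stress_one_smul_le_two_mul_stressStar_one {α E : Type*} [PseudoMetricSpace α]
    [NormedAddCommGroup E] [NormedSpace ℝ E] (X : Finset α) (f : α → E)
    (hf : 0 < ∑ p ∈ X.offDiag, dist (f p.1) (f p.2)) :
    stress X (fun x => ((∑ p ∈ X.offDiag, dist p.1 p.2) /
        (∑ p ∈ X.offDiag, dist (f p.1) (f p.2))) • f x) 1 ≤ 2 * stressStar X f 1 := by
  have hc : 0 ≤ (∑ p ∈ X.offDiag, dist p.1 p.2) / ∑ p ∈ X.offDiag, dist (f p.1) (f p.2) :=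
    div_nonneg (Finset.sum_nonneg fun _ _ => dist_nonneg) hf.le
  simp only [stress, stressStar, div_one, Real.rpow_one, dist_smul₀, Real.norm_eq_abs,
    abs_of_nonneg hc]
  exact Finset.sum_abs_mul_sub_div_sum_le_of_sum_pos (fun _ _ => dist_nonneg) hf

/-- some rescaling `f' = c·f` satisfies `Stress₁(f') ≤ 4·Stress*₁(f)`. -/
theorem stress_le_four_stressStar_of_rescaled {X : Type*} [MetricSpace X] [Fintype X]
    (hX : 2 ≤ Fintype.card X) {k : ℕ}
    (f : X → EuclideanSpace ℝ (Fin k)) (hf : Function.Injective f) :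
    ∃ c : ℝ, 0 < c ∧
      stress (Finset.univ : Finset X) (fun x => c • f x) 1 ≤
        4 * stressStar (Finset.univ : Finset X) f 1 := by
  obtain ⟨x, y, hxy⟩ := Fintype.exists_pair_of_one_lt_card hX
  have hne : (Finset.univ : Finset X).offDiag.Nonempty := ⟨(x, y), by simpa using hxy⟩
  have hd : 0 < ∑ p ∈ Finset.univ.offDiag, dist p.1 p.2 :=
    Finset.sum_pos (fun p hp => dist_pos.2 (Finset.mem_offDiag.1 hp).2.2) hne
  have hdf : 0 < ∑ p ∈ Finset.univ.offDiag, dist (f p.1) (f p.2) :=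
    Finset.sum_pos (fun p hp => dist_pos.2 (hf.ne (Finset.mem_offDiag.1 hp).2.2)) hne
  have hstar : 0 ≤ stressStar (Finset.univ : Finset X) f 1 := by
    unfold stressStar
    positivity
  refine ⟨_, div_pos hd hdf, ?_⟩
  linarith [stress_one_smul_le_two_mul_stressStar_one Finset.univ f hdf]
end
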